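/- arXiv:1810.13357 — 8 statements merged into one kernel-verified Lean document; each statement's English description precedes it below -/
import Mathlib

section
/- Let μ be a nontrivial probability measure on the unit circle with monic orthogonal polynomials Φ_n. For each n there exists α_n in the open unit disk such that Φ_{n+1}(z) = z Φ_n(z) − conj(α_n) Φ_n^*(z), where Φ_n^*(z) = z^n conj(Φ_n(1/conj(z))). -/
open MeasureTheory Polynomial

/-- The reversed, coefficient-conjugated polynomial `τ_n(p)(z) = z^n conj(p(1/conj z))`. -/
noncomputable def polyStar (n : ℕ) (p : Polynomial ℂ) : Polynomial ℂ :=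
  (p.map (starRingEnd ℂ)).reflect n

/-!
In `L²(μ)` multiplication by `z` is unitary and `p ↦ p^*` (for `deg p ≤ n`) is antiunitary,
since `conj z = z⁻¹` on the circle. With `c = Φₙ₊₁(0)`, the polynomial
`Q = Φₙ₊₁ - z Φₙ - c Φₙ^*` vanishes at `0` and has degree at most `n`, so `Q = z R` with
`deg R < n`; each of its three terms is orthogonal to `z^{k+1}` for `k < n` (for `Φₙ^*` because
`⟨z^{k+1}, Φₙ^*⟩ = ⟨Φₙ, z^{n-k-1}⟩`), hence `Q ⟂ Q` and `Q = 0`. As `Φₙ₊₁ ⟂ Φₙ^*`, Pythagoras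
applied to `z Φₙ = Φₙ₊₁ - c Φₙ^*` gives `‖Φₙ‖² = ‖Φₙ₊₁‖² + |c|² ‖Φₙ‖²`, and `Φₙ₊₁ ≠ 0` forces
`|c| < 1`; take `α = -conj c`.
-/

open ComplexConjugate

theorem coeff_polyStar_zero (n : ℕ) (p : ℂ[X]) : (polyStar n p).coeff 0 = conj (p.coeff n) := by
  rw [polyStar, coeff_reflect, revAt_zero, coeff_map]

theorem natDegree_polyStar_le {n : ℕ} {p : ℂ[X]} (hp : p.natDegree ≤ n) :
    (polyStar n p).natDegree ≤ n := by
  refine natDegree_le_iff_coeff_eq_zero.mpr fun m hm => ?_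
  rw [polyStar, coeff_reflect, revAt_eq_self_of_lt hm, coeff_map,
    coeff_eq_zero_of_natDegree_lt (hp.trans_lt hm), map_zero]

theorem degree_C_mul_polyStar_lt (c : ℂ) {n : ℕ} {p : ℂ[X]} (hp : p.natDegree ≤ n) :
    (C c * polyStar n p).degree < (n + 1 : ℕ) := by
  rw [C_mul']
  exact (degree_smul_le _ _).trans_lt <| (degree_le_of_natDegree_le
    (natDegree_polyStar_le hp)).trans_lt (by exact_mod_cast n.lt_succ_self)

theorem conj_mul_self_of_norm_eq_one {z : ℂ} (hz : ‖z‖ = 1) : conj z * z = 1 := by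
  rw [Complex.conj_mul', hz]; norm_num

theorem eval_polyStar_of_norm_eq_one {n : ℕ} {p : ℂ[X]} (hp : p.natDegree ≤ n) {z : ℂ}
    (hz : ‖z‖ = 1) : (polyStar n p).eval z = z ^ n * conj (p.eval z) := by
  let _ : Invertible (conj z) := ⟨z, mul_comm z _ ▸ conj_mul_self_of_norm_eq_one hz,
    conj_mul_self_of_norm_eq_one hz⟩
  have h := eval₂_reflect_mul_pow (RingHom.id ℂ) (conj z) n (p.map (starRingEnd ℂ))
    (natDegree_map_le.trans hp)
  rw [eval₂_id, eval₂_id, eval_map, eval₂_at_apply] at h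
  -- `⅟ (conj z)` unfolds to `z`
  change (polyStar n p).eval z * conj z ^ n = conj (p.eval z) at h
  have hzn : z ^ n * conj z ^ n = 1 := by
    rw [← mul_pow, mul_comm, conj_mul_self_of_norm_eq_one hz, one_pow]
  rw [← h]
  linear_combination -(polyStar n p).eval z * hzn

theorem Polynomial.memLp_eval_of_ae_mem_compact {μ : Measure ℂ} [IsFiniteMeasure μ] {K : Set ℂ}
    (hK : IsCompact K) (hμ : ∀ᵐ z ∂μ, z ∈ K) (p : ℂ[X]) (q : ENNReal) :
    MemLp (fun z => p.eval z) q μ := by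
  obtain ⟨C, hC⟩ := hK.exists_bound_of_continuousOn p.continuous.continuousOn
  exact MemLp.of_bound p.continuous.aestronglyMeasurable C (hμ.mono hC)

theorem inner_map_eq_zero_of_degree_lt {𝕜 E : Type*} [RCLike 𝕜] [NormedAddCommGroup E]
    [InnerProductSpace 𝕜 E] (T : 𝕜[X] →ₗ[𝕜] E) {v : E} {m : ℕ}
    (hv : ∀ k < m, inner 𝕜 v (T (X ^ k)) = 0) {q : 𝕜[X]} (hq : q.degree < m) :
    inner 𝕜 v (T q) = 0 := by
  classical
  have hle : degreeLT 𝕜 m ≤ ((innerₛₗ 𝕜 v).comp T).ker := by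
    rw [degreeLT_eq_span_X_pow, Submodule.span_le]
    intro _ hx
    obtain ⟨k, hk, rfl⟩ := Finset.mem_image.1 (Finset.mem_coe.1 hx)
    exact hv k (Finset.mem_range.1 hk)
  exact hle (mem_degreeLT.2 hq)

section L2

variable {μ : Measure ℂ} [IsFiniteMeasure μ]

theorem Polynomial.memLp_eval_of_ae_norm_eq_one (hμ : ∀ᵐ z ∂μ, ‖z‖ = 1) (p : ℂ[X]) : MemLp (fun z => p.eval z) 2 μ :=
  p.memLp_eval_of_ae_mem_compact (isCompact_sphere 0 1)
    (hμ.mono fun _ hz => mem_sphere_zero_iff_norm.2 hz) 2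

noncomputable def toL2 (hμ : ∀ᵐ z ∂μ, ‖z‖ = 1) : ℂ[X] →ₗ[ℂ] Lp ℂ 2 μ where
  toFun p := MemLp.toLp _ (p.memLp_eval_of_ae_norm_eq_one hμ)
  map_add' p q := by
    simp only [eval_add]
    exact MemLp.toLp_add (p.memLp_eval_of_ae_norm_eq_one hμ) (q.memLp_eval_of_ae_norm_eq_one hμ)
  map_smul' a p := by
    simp only [eval_smul]
    exact MemLp.toLp_const_smul a (p.memLp_eval_of_ae_norm_eq_one hμ)

variable (hμ : ∀ᵐ z ∂μ, ‖z‖ = 1)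

theorem coeFn_toL2 (p : ℂ[X]) : toL2 hμ p =ᵐ[μ] fun z => p.eval z :=
  (p.memLp_eval_of_ae_norm_eq_one hμ).coeFn_toLp

theorem inner_toL2 (p q : ℂ[X]) :
    inner ℂ (toL2 hμ p) (toL2 hμ q) = ∫ z, conj (p.eval z) * q.eval z ∂μ := by
  rw [L2.inner_def]
  refine integral_congr_ae ?_
  filter_upwards [coeFn_toL2 hμ p, coeFn_toL2 hμ q] with z hp hq
  rw [hp, hq, RCLike.inner_apply, mul_comm]

theorem toL2_injective (hnontriv : ∀ s : Finset ℂ, μ ((↑s : Set ℂ)ᶜ) ≠ 0) :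
    Function.Injective (toL2 hμ) := by
  refine (injective_iff_map_eq_zero _).2 fun p hp => ?_
  by_contra hp0
  have hroots : ∀ᵐ z ∂μ, p.eval z = 0 := by
    filter_upwards [coeFn_toL2 hμ p, Lp.eq_zero_iff_ae_eq_zero.1 hp] with z h h0
    rw [← h, h0, Pi.zero_apply]
  refine hnontriv p.roots.toFinset (measure_mono_null (fun z hz => ?_) (ae_iff.1 hroots))
  simpa [hp0] using hz

theorem inner_toL2_X_mul (p q : ℂ[X]) :
    inner ℂ (toL2 hμ (X * p)) (toL2 hμ (X * q)) = inner ℂ (toL2 hμ p) (toL2 hμ q) := by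
  rw [inner_toL2, inner_toL2]
  refine integral_congr_ae ?_
  filter_upwards [hμ] with z hz
  simp only [eval_mul, eval_X, map_mul]
  linear_combination conj (p.eval z) * q.eval z * conj_mul_self_of_norm_eq_one hz

theorem inner_toL2_X_pow_polyStar {n k : ℕ} (hk : k ≤ n) {p : ℂ[X]} (hp : p.natDegree ≤ n) :
    inner ℂ (toL2 hμ (X ^ k)) (toL2 hμ (polyStar n p)) =
      inner ℂ (toL2 hμ p) (toL2 hμ (X ^ (n - k))) := by
  rw [inner_toL2, inner_toL2]
  refine integral_congr_ae ?_
  filter_upwards [hμ] with z hz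
  simp only [eval_polyStar_of_norm_eq_one hp hz, eval_pow, eval_X, map_pow]
  rw [← Nat.sub_add_cancel hk, pow_add, Nat.add_sub_cancel]
  have hzk : conj z ^ k * z ^ k = 1 := by
    rw [← mul_pow, conj_mul_self_of_norm_eq_one hz, one_pow]
  linear_combination z ^ (n - k) * conj (p.eval z) * hzk

theorem inner_toL2_polyStar {n : ℕ} {p q : ℂ[X]} (hp : p.natDegree ≤ n) (hq : q.natDegree ≤ n) :
    inner ℂ (toL2 hμ (polyStar n p)) (toL2 hμ (polyStar n q)) =
      inner ℂ (toL2 hμ q) (toL2 hμ p) := by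
  rw [inner_toL2, inner_toL2]
  refine integral_congr_ae ?_
  filter_upwards [hμ] with z hz
  simp only [eval_polyStar_of_norm_eq_one hp hz, eval_polyStar_of_norm_eq_one hq hz, map_mul,
    map_pow, Complex.conj_conj]
  have hzn : conj z ^ n * z ^ n = 1 := by
    rw [← mul_pow, conj_mul_self_of_norm_eq_one hz, one_pow]
  linear_combination conj (q.eval z) * p.eval z * hzn

theorem norm_toL2_X_mul (p : ℂ[X]) : ‖toL2 hμ (X * p)‖ = ‖toL2 hμ p‖ := by
  rw [norm_eq_sqrt_re_inner (𝕜 := ℂ), inner_toL2_X_mul, ← norm_eq_sqrt_re_inner]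

theorem norm_toL2_polyStar {n : ℕ} {p : ℂ[X]} (hp : p.natDegree ≤ n) :
    ‖toL2 hμ (polyStar n p)‖ = ‖toL2 hμ p‖ := by
  rw [norm_eq_sqrt_re_inner (𝕜 := ℂ), inner_toL2_polyStar hμ hp hp, ← norm_eq_sqrt_re_inner]

theorem eq_X_mul_add_C_mul_polyStar (hnontriv : ∀ s : Finset ℂ, μ ((↑s : Set ℂ)ᶜ) ≠ 0) {n : ℕ}
    {Φ Ψ : ℂ[X]} (hΦ : Φ.Monic) (hΦdeg : Φ.natDegree = n) (hΨ : Ψ.Monic)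
    (hΨdeg : Ψ.natDegree = n + 1)
    (hΦorth : ∀ q : ℂ[X], q.degree < n → inner ℂ (toL2 hμ Φ) (toL2 hμ q) = 0)
    (hΨorth : ∀ q : ℂ[X], q.degree < (n + 1 : ℕ) → inner ℂ (toL2 hμ Ψ) (toL2 hμ q) = 0) :
    Ψ = X * Φ + C (Ψ.coeff 0) * polyStar n Φ := by
  set S := polyStar n Φ
  set Q := Ψ - X * Φ - C (Ψ.coeff 0) * S
  have hQ_coeff_zero : Q.coeff 0 = 0 := by
    have hΦn : Φ.coeff n = 1 := hΦdeg ▸ hΦ.coeff_natDegree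
    simp [Q, S, coeff_polyStar_zero, hΦn]
  have hQ_deg : Q.degree < (n + 1 : ℕ) := by
    have hΨ_deg : Ψ.degree = (n + 1 : ℕ) := by rw [degree_eq_natDegree hΨ.ne_zero, hΨdeg]
    have hXΦ_deg : (X * Φ).degree = ((n + 1 : ℕ) : WithBot ℕ) := by
      rw [X_mul, degree_mul_X, degree_eq_natDegree hΦ.ne_zero, hΦdeg, Nat.cast_succ]
    have h1 : (Ψ - X * Φ).degree < ((n + 1 : ℕ) : WithBot ℕ) :=
      hΨ_deg ▸ degree_sub_lt_left (hΨ_deg.trans hXΦ_deg.symm) hΨ.ne_zero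
        (by rw [hΨ.leadingCoeff, (monic_X.mul hΦ).leadingCoeff])
    exact (degree_sub_le _ _).trans_lt (max_lt h1 (degree_C_mul_polyStar_lt _ hΦdeg.le))
  obtain ⟨R, hQR⟩ := X_dvd_iff.2 hQ_coeff_zero
  have hR_deg : R.degree < n := by
    rw [hQR, X_mul, degree_mul_X] at hQ_deg
    exact lt_of_add_lt_add_right (by exact_mod_cast hQ_deg)
  have hQ_orth : inner ℂ (toL2 hμ Q) (toL2 hμ (X * R)) = 0 := by
    refine inner_map_eq_zero_of_degree_lt ((toL2 hμ).comp (LinearMap.mulLeft ℂ X)) ?_ hR_deg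
    intro k hk
    have hS : inner ℂ (toL2 hμ S) (toL2 hμ (X * X ^ k)) = 0 := by
      rw [← inner_conj_symm, ← pow_succ', inner_toL2_X_pow_polyStar hμ hk hΦdeg.le,
        hΦorth _ (by rw [degree_X_pow]; exact_mod_cast (by omega : n - (k + 1) < n)), map_zero]
    simp only [LinearMap.comp_apply, LinearMap.mulLeft_apply, Q, C_mul', map_sub, map_smul,
      inner_sub_left, inner_smul_left, inner_toL2_X_mul, hS, mul_zero, sub_zero]
    rw [hΦorth _ (by rw [degree_X_pow]; exact_mod_cast hk), ← pow_succ',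
      hΨorth _ (by rw [degree_X_pow]; exact_mod_cast (by omega : k + 1 < n + 1)), sub_zero]
  have hQ : Q = 0 := toL2_injective hμ hnontriv <| by
    rw [map_zero, ← inner_self_eq_zero (𝕜 := ℂ)]
    nth_rw 2 [hQR]
    exact hQ_orth
  rw [← sub_eq_zero, ← sub_sub]
  exact hQ

theorem norm_lt_one_of_eq_X_mul_add_C_mul_polyStar
    (hnontriv : ∀ s : Finset ℂ, μ ((↑s : Set ℂ)ᶜ) ≠ 0) {n : ℕ} {Φ Ψ : ℂ[X]} {c : ℂ}
    (hΦdeg : Φ.natDegree ≤ n) (hΨ : Ψ ≠ 0)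
    (hΨorth : ∀ q : ℂ[X], q.degree < (n + 1 : ℕ) → inner ℂ (toL2 hμ Ψ) (toL2 hμ q) = 0)
    (hrec : Ψ = X * Φ + C c * polyStar n Φ) : ‖c‖ < 1 := by
  have horth : inner ℂ (toL2 hμ Ψ) (-toL2 hμ (C c * polyStar n Φ)) = 0 := by
    rw [inner_neg_right, hΨorth _ (degree_C_mul_polyStar_lt c hΦdeg), neg_zero]
  have hpyth : ‖toL2 hμ Φ‖ * ‖toL2 hμ Φ‖ =
      ‖toL2 hμ Ψ‖ * ‖toL2 hμ Ψ‖ + ‖c‖ * ‖toL2 hμ Φ‖ * (‖c‖ * ‖toL2 hμ Φ‖) := by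
    have h := norm_add_sq_eq_norm_sq_add_norm_sq_of_inner_eq_zero _ _ horth
    rwa [← map_neg, ← map_add, ← sub_eq_add_neg, ← eq_sub_of_add_eq hrec.symm, norm_toL2_X_mul,
      map_neg, norm_neg, C_mul', map_smul, norm_smul, norm_toL2_polyStar hμ hΦdeg] at h
  have hΨ_pos : 0 < ‖toL2 hμ Ψ‖ :=
    norm_pos_iff.2 ((map_ne_zero_iff _ (toL2_injective hμ hnontriv)).2 hΨ)
  by_contra! hc
  have hc2 : 1 ≤ ‖c‖ * ‖c‖ := one_le_mul_of_one_le_of_one_le hc hc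
  nlinarith [mul_nonneg (sub_nonneg.2 hc2) (mul_self_nonneg ‖toL2 hμ Φ‖)]

end L2

/-- Szegő recursion: for a nontrivial probability measure on the unit circle with monic
orthogonal polynomials `Φ`, there is a Verblunsky coefficient `α n` in the open unit disk with
`Φ (n+1) = z Φ n - conj (α n) (Φ n)^*`. -/
theorem szego_recursion
    (μ : Measure ℂ) (hprob : IsProbabilityMeasure μ)
    (hcirc : ∀ᵐ z ∂μ, ‖z‖ = 1)
    (hnontriv : ∀ s : Finset ℂ, μ ((↑s : Set ℂ)ᶜ) ≠ 0)
    (Φ : ℕ → Polynomial ℂ)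
    (hmonic : ∀ n, (Φ n).Monic)
    (hdeg : ∀ n, (Φ n).natDegree = n)
    (horth : ∀ n k, k < n → ∫ z, (starRingEnd ℂ) ((Φ n).eval z) * z ^ k ∂μ = 0)
    (n : ℕ) :
    ∃ α : ℂ, ‖α‖ < 1 ∧
      Φ (n + 1) = X * Φ n - C ((starRingEnd ℂ) α) * polyStar n (Φ n) := by
  have hΦorth (m : ℕ) (q : ℂ[X]) (hq : q.degree < m) :
      inner ℂ (toL2 hcirc (Φ m)) (toL2 hcirc q) = 0 :=
    inner_map_eq_zero_of_degree_lt _ (fun k hk => by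
      simpa only [inner_toL2, eval_pow, eval_X] using horth m k hk) hq
  have hrec := eq_X_mul_add_C_mul_polyStar hcirc hnontriv (hmonic n) (hdeg n) (hmonic (n + 1))
    (hdeg (n + 1)) (hΦorth n) (hΦorth (n + 1))
  refine ⟨-conj ((Φ (n + 1)).coeff 0), ?_, ?_⟩
  · rw [norm_neg, Complex.norm_conj]
    exact norm_lt_one_of_eq_X_mul_add_C_mul_polyStar hcirc hnontriv (hdeg n).le
      (hmonic (n + 1)).ne_zero (hΦorth (n + 1)) hrec
  · rw [map_neg, Complex.conj_conj, map_neg, neg_mul, sub_neg_eq_add]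
    exact hrec
end

section
/- All zeros of the monic orthogonal polynomial Φ_n of a nontrivial probability measure on the unit circle lie strictly inside the open unit disk. -/
open MeasureTheory Polynomial

lemma integrable_of_circ {E : Type*} [NormedAddCommGroup E]
    (μ : Measure ℂ) [IsFiniteMeasure μ] (hcirc : ∀ᵐ z ∂μ, ‖z‖ = 1)
    (h : ℂ → E) (hc : Continuous h) : Integrable h μ := by
  obtain ⟨C, hC⟩ := (isCompact_sphere (0:ℂ) 1).exists_bound_of_continuousOn hc.continuousOn
  refine Integrable.mono' (integrable_const C) hc.aestronglyMeasurable ?_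
  filter_upwards [hcirc] with z hz
  exact hC z (by simpa [mem_sphere_iff_norm] using hz)

/-- All zeros of the monic orthogonal polynomials of a nontrivial probability measure on the
unit circle lie strictly inside the open unit disk. -/
theorem opuc_zeros_in_disk
    (μ : Measure ℂ) (hprob : IsProbabilityMeasure μ)
    (hcirc : ∀ᵐ z ∂μ, ‖z‖ = 1)
    (hnontriv : ∀ s : Finset ℂ, μ ((↑s : Set ℂ)ᶜ) ≠ 0)
    (n : ℕ) (Φ : Polynomial ℂ)
    (hmonic : Φ.Monic) (hdeg : Φ.natDegree = n)
    (horth : ∀ k, k < n → ∫ z, (starRingEnd ℂ) (Φ.eval z) * z ^ k ∂μ = 0) :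
    ∀ z : ℂ, Φ.IsRoot z → ‖z‖ < 1 := by
  intro z₀ hroot
  by_contra hge
  push_neg at hge
  have hconj : Continuous fun z : ℂ => (starRingEnd ℂ) z := continuous_star
  have hΦ0 : Φ ≠ 0 := hmonic.ne_zero
  have hn : 0 < n := by
    rcases Nat.eq_zero_or_pos n with h0 | h
    · exfalso
      have h1 : Φ = 1 := hmonic.natDegree_eq_zero.mp (hdeg.trans h0)
      simp [h1, IsRoot] at hroot
    · exact h
  obtain ⟨q, hq⟩ : (X - C z₀) ∣ Φ := dvd_iff_isRoot.mpr hroot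
  have hq0 : q ≠ 0 := by
    rintro rfl; simp at hq; exact hΦ0 hq
  have hqdeg : q.natDegree < n := by
    have : Φ.natDegree = 1 + q.natDegree := by
      rw [hq, natDegree_mul (X_sub_C_ne_zero z₀) hq0, natDegree_X_sub_C]
    omega
  set f : ℂ → ℂ := fun z => Φ.eval z with hf
  set g : ℂ → ℂ := fun z => q.eval z with hg
  have hfc : Continuous f := Φ.continuous
  have hgc : Continuous g := q.continuous
  have hfg : ∀ z : ℂ, f z = (z - z₀) * g z := by
    intro z; simp [hf, hg, hq]
  -- cross term vanishes
  have hcross : ∫ z, (starRingEnd ℂ) (f z) * g z ∂μ = 0 := by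
    have hpt : ∀ z : ℂ, (starRingEnd ℂ) (f z) * g z
        = ∑ k ∈ Finset.range n, q.coeff k * ((starRingEnd ℂ) (f z) * z ^ k) := by
      intro z
      rw [hg]
      simp only [eval_eq_sum_range' hqdeg, Finset.mul_sum]
      exact Finset.sum_congr rfl fun k _ => by ring
    calc ∫ z, (starRingEnd ℂ) (f z) * g z ∂μ
        = ∫ z, ∑ k ∈ Finset.range n, q.coeff k * ((starRingEnd ℂ) (f z) * z ^ k) ∂μ := by
          simp only [hpt]
      _ = ∑ k ∈ Finset.range n, ∫ z, q.coeff k * ((starRingEnd ℂ) (f z) * z ^ k) ∂μ := by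
          refine integral_finset_sum _ fun k _ => ?_
          exact integrable_of_circ μ hcirc _
            (continuous_const.mul ((hconj.comp hfc).mul (continuous_pow k)))
      _ = 0 := by
          refine Finset.sum_eq_zero fun k hk => ?_
          rw [integral_const_mul, horth k (Finset.mem_range.mp hk), mul_zero]
  have hcross' : ∫ z, (starRingEnd ℂ) (g z) * f z ∂μ = 0 := by
    have : (fun z => (starRingEnd ℂ) (g z) * f z)
        = fun z => (starRingEnd ℂ) ((starRingEnd ℂ) (f z) * g z) := by
      funext z; simp only [map_mul, Complex.conj_conj]; ring
    rw [this, integral_conj, hcross, map_zero]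
  -- main pointwise identity on the circle
  have hpt2 : ∀ᵐ z ∂μ, (starRingEnd ℂ) (g z) * g z
      = (starRingEnd ℂ) (f z) * f z + z₀ * ((starRingEnd ℂ) (f z) * g z)
        + (starRingEnd ℂ) z₀ * ((starRingEnd ℂ) (g z) * f z)
        + ((‖z₀‖:ℂ)^2) * ((starRingEnd ℂ) (g z) * g z) := by
    filter_upwards [hcirc] with z hz
    have h1 : (starRingEnd ℂ) z * z = 1 := by
      rw [Complex.conj_mul', hz]; norm_num
    have h4 : ((‖z₀‖:ℂ))^2 = (starRingEnd ℂ) z₀ * z₀ := (Complex.conj_mul' z₀).symm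
    rw [hfg z, h4]
    simp only [map_mul, map_sub]
    linear_combination (-((starRingEnd ℂ) (g z) * g z)) * h1
  -- integrability of all pieces
  have hint_gg : Integrable (fun z => (starRingEnd ℂ) (g z) * g z) μ :=
    integrable_of_circ μ hcirc _ ((hconj.comp hgc).mul hgc)
  have hint_ff : Integrable (fun z => (starRingEnd ℂ) (f z) * f z) μ :=
    integrable_of_circ μ hcirc _ ((hconj.comp hfc).mul hfc)
  have hint_fg : Integrable (fun z => (starRingEnd ℂ) (f z) * g z) μ :=
    integrable_of_circ μ hcirc _ ((hconj.comp hfc).mul hgc)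
  have hint_gf : Integrable (fun z => (starRingEnd ℂ) (g z) * f z) μ :=
    integrable_of_circ μ hcirc _ ((hconj.comp hgc).mul hfc)
  have hI2 : Integrable (fun z => z₀ * ((starRingEnd ℂ) (f z) * g z)) μ :=
    hint_fg.const_mul z₀
  have hI3 : Integrable (fun z => (starRingEnd ℂ) z₀ * ((starRingEnd ℂ) (g z) * f z)) μ :=
    hint_gf.const_mul _
  have hI4 : Integrable (fun z => ((‖z₀‖:ℂ)^2) * ((starRingEnd ℂ) (g z) * g z)) μ :=
    hint_gg.const_mul _
  have hI12 : Integrable (fun z => (starRingEnd ℂ) (f z) * f z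
      + z₀ * ((starRingEnd ℂ) (f z) * g z)) μ := hint_ff.add hI2
  have hI123 : Integrable (fun z => (starRingEnd ℂ) (f z) * f z
      + z₀ * ((starRingEnd ℂ) (f z) * g z)
      + (starRingEnd ℂ) z₀ * ((starRingEnd ℂ) (g z) * f z)) μ := hI12.add hI3
  have hmain : ∫ z, (starRingEnd ℂ) (g z) * g z ∂μ
      = ∫ z, (starRingEnd ℂ) (f z) * f z ∂μ
        + ((‖z₀‖:ℂ)^2) * ∫ z, (starRingEnd ℂ) (g z) * g z ∂μ := by
    have e2 : ∫ z, ((starRingEnd ℂ) (f z) * f z + z₀ * ((starRingEnd ℂ) (f z) * g z)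
        + (starRingEnd ℂ) z₀ * ((starRingEnd ℂ) (g z) * f z)
        + ((‖z₀‖:ℂ)^2) * ((starRingEnd ℂ) (g z) * g z)) ∂μ
        = ∫ z, (starRingEnd ℂ) (f z) * f z ∂μ
          + z₀ * ∫ z, (starRingEnd ℂ) (f z) * g z ∂μ
          + (starRingEnd ℂ) z₀ * ∫ z, (starRingEnd ℂ) (g z) * f z ∂μ
          + ((‖z₀‖:ℂ)^2) * ∫ z, (starRingEnd ℂ) (g z) * g z ∂μ := by
      rw [integral_add hI123 hI4, integral_add hI12 hI3, integral_add hint_ff hI2,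
        integral_const_mul, integral_const_mul, integral_const_mul]
    conv_lhs => rw [integral_congr_ae hpt2]
    rw [e2, hcross, hcross', mul_zero, mul_zero, add_zero, add_zero]
  -- convert to real integrals
  have hffr : ∫ z, (starRingEnd ℂ) (f z) * f z ∂μ = ((∫ z, ‖f z‖^2 ∂μ : ℝ) : ℂ) := by
    refine Eq.trans ?_ (integral_ofReal (f := fun z => ‖f z‖^2))
    refine integral_congr_ae (ae_of_all _ fun z => ?_)
    show (starRingEnd ℂ) (f z) * f z = ((‖f z‖^2 : ℝ) : ℂ)
    rw [Complex.conj_mul']; push_cast; ring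
  have hggr : ∫ z, (starRingEnd ℂ) (g z) * g z ∂μ = ((∫ z, ‖g z‖^2 ∂μ : ℝ) : ℂ) := by
    refine Eq.trans ?_ (integral_ofReal (f := fun z => ‖g z‖^2))
    refine integral_congr_ae (ae_of_all _ fun z => ?_)
    show (starRingEnd ℂ) (g z) * g z = ((‖g z‖^2 : ℝ) : ℂ)
    rw [Complex.conj_mul']; push_cast; ring
  set A : ℝ := ∫ z, ‖f z‖^2 ∂μ with hA
  set B : ℝ := ∫ z, ‖g z‖^2 ∂μ with hB
  have hreal : B = A + ‖z₀‖^2 * B := by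
    have h := hmain
    rw [hffr, hggr] at h
    exact_mod_cast h
  have hintA : Integrable (fun z => ‖f z‖^2) μ :=
    integrable_of_circ μ hcirc _ ((hfc.norm).pow 2)
  have hApos : 0 < A := by
    rw [hA, integral_pos_iff_support_of_nonneg (fun z => sq_nonneg _) hintA]
    have hsub : ((Φ.roots.toFinset : Finset ℂ) : Set ℂ)ᶜ
        ⊆ Function.support fun z => ‖f z‖^2 := by
      intro z hz
      simp only [Function.mem_support]
      intro h0
      apply hz
      have hfz : f z = 0 := by
        have : ‖f z‖ = 0 := by nlinarith [norm_nonneg (f z)]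
        simpa using this
      have hmem : z ∈ Φ.roots.toFinset := by
        rw [Multiset.mem_toFinset, mem_roots hΦ0]
        exact hfz
      exact Finset.mem_coe.mpr hmem
    exact lt_of_lt_of_le (pos_iff_ne_zero.mpr (hnontriv Φ.roots.toFinset))
      (measure_mono hsub)
  have hBnn : 0 ≤ B := integral_nonneg fun z => sq_nonneg _
  have hsq : 1 ≤ ‖z₀‖^2 := by nlinarith [hge]
  nlinarith [mul_le_mul_of_nonneg_right hsq hBnn]
end

section
/- Let B(z) = ∏_{j=1}^n (z − z_j)/(1 − conj(z_j) z) be a finite Blaschke product with all z_j in the open unit disk. Then for each λ on the unit circle, the equation z·B(z) = conj(λ) has exactly n+1 distinct solutions, all lying on the unit circle. -/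
/-!
By the identity `|1 - ā w|² - |w - a|² = (1 - |w|²)(1 - |a|²)`, each factor `(w - a)/(1 - ā w)`
has modulus at most one inside the disk and at least one outside, so `|w B(w)|` is `< 1` for
`|w| < 1` and `> 1` for `|w| > 1`: every solution of `w B(w) = c` with `|c| = 1` is on the circle.
Clearing denominators, the solutions are the roots of the monic polynomial
`w ∏ (w - z_j) - c ∏ (1 - z̄_j w)` of degree `n + 1`. These roots are simple: for `|u| = 1`,
`u (wB)'/(wB) = 1 + ∑ (1 - |z_j|²)/|u - z_j|² > 0` (the argument of `e^{iθ} B(e^{iθ})` is strictly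
increasing), so `(wB)'`, and with it the derivative of the polynomial, does not vanish at a root.
-/

open Finset Polynomial Complex ComplexConjugate

section BlaschkeFactor

variable {a u w : ℂ}

theorem normSq_one_sub_conj_mul_sub_normSq_sub (a w : ℂ) :
    normSq (1 - conj a * w) - normSq (w - a) = (1 - normSq w) * (1 - normSq a) := by
  simp only [normSq_apply, sub_re, sub_im, mul_re, mul_im, one_re, one_im, conj_re, conj_im]
  ring

theorem norm_sub_le_norm_one_sub_conj_mul (ha : ‖a‖ ≤ 1) (hw : ‖w‖ ≤ 1) :
    ‖w - a‖ ≤ ‖1 - conj a * w‖ := by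
  have h := normSq_one_sub_conj_mul_sub_normSq_sub a w
  simp only [normSq_eq_norm_sq] at h
  rw [← sq_le_sq₀ (norm_nonneg _) (norm_nonneg _)]
  nlinarith [mul_nonneg (sub_nonneg.mpr (pow_le_one₀ (norm_nonneg w) hw (n := 2)))
    (sub_nonneg.mpr (pow_le_one₀ (norm_nonneg a) ha (n := 2)))]

theorem norm_one_sub_conj_mul_le_norm_sub (ha : ‖a‖ ≤ 1) (hw : 1 ≤ ‖w‖) :
    ‖1 - conj a * w‖ ≤ ‖w - a‖ := by
  have h := normSq_one_sub_conj_mul_sub_normSq_sub a w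
  simp only [normSq_eq_norm_sq] at h
  rw [← sq_le_sq₀ (norm_nonneg _) (norm_nonneg _)]
  nlinarith [mul_nonneg (sub_nonneg.mpr (one_le_pow₀ hw (n := 2)))
    (sub_nonneg.mpr (pow_le_one₀ (norm_nonneg a) ha (n := 2)))]

theorem one_sub_conj_mul_ne_zero (ha : ‖a‖ < 1) (hw : ‖w‖ ≤ 1) :
    1 - conj a * w ≠ 0 := by
  rw [sub_ne_zero]
  apply ne_of_apply_ne norm
  rw [norm_mul, Complex.norm_conj, norm_one]
  nlinarith [norm_nonneg a, norm_nonneg w]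

theorem mul_one_div_sub_add_conj_div_one_sub_conj_mul (ha : ‖a‖ < 1) (hu : ‖u‖ = 1) :
    u * (1 / (u - a) + conj a / (1 - conj a * u)) = ((1 - normSq a) / normSq (u - a) : ℝ) := by
  have hua : u - a ≠ 0 := sub_ne_zero.mpr (ne_of_apply_ne norm (by rw [hu]; exact ha.ne'))
  have hau : 1 - conj a * u = u * conj (u - a) := by
    rw [map_sub, mul_sub, mul_conj, normSq_eq_norm_sq, hu]
    push_cast
    ring
  have hu0 : u ≠ 0 := norm_ne_zero_iff.mp (by rw [hu]; exact one_ne_zero)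
  rw [hau]
  push_cast
  rw [← mul_conj, ← mul_conj, map_sub]
  have : conj u - conj a ≠ 0 := by rw [← map_sub]; exact (_root_.map_ne_zero _).mpr hua
  have h1 : u * conj u = 1 := by rw [mul_conj, normSq_eq_norm_sq, hu]; simp
  field_simp
  linear_combination h1

theorem logDeriv_sub_div_one_sub_conj_mul (hua : u - a ≠ 0) (hau : 1 - conj a * u ≠ 0) :
    logDeriv (fun w => (w - a) / (1 - conj a * w)) u
      = 1 / (u - a) + conj a / (1 - conj a * u) := by
  rw [logDeriv_div u hua hau (by fun_prop) (by fun_prop), logDeriv_apply, logDeriv_apply]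
  have h := (((hasDerivAt_id u).const_mul (conj a)).const_sub 1).deriv
  simp only [id, mul_one] at h
  simp only [deriv_sub_const, deriv_id'', h]
  ring

end BlaschkeFactor

section Blaschke

variable {ι : Type*} [Fintype ι]

noncomputable def blaschke (z : ι → ℂ) (w : ℂ) : ℂ :=
  ∏ j, (w - z j) / (1 - conj (z j) * w)

variable {z : ι → ℂ} {u : ℂ}

theorem mul_logDeriv_id_mul_blaschke (hz : ∀ j, ‖z j‖ < 1) (hu : ‖u‖ = 1) :
    u * logDeriv (fun w => w * blaschke z w) u
      = ((1 + ∑ j, (1 - normSq (z j)) / normSq (u - z j) : ℝ) : ℂ) := by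
  have hu0 : u ≠ 0 := norm_ne_zero_iff.mp (by rw [hu]; exact one_ne_zero)
  have hnum : ∀ j, u - z j ≠ 0 := fun j =>
    sub_ne_zero.mpr (ne_of_apply_ne norm (by rw [hu]; exact (hz j).ne'))
  have hden : ∀ j, 1 - conj (z j) * u ≠ 0 := fun j => one_sub_conj_mul_ne_zero (hz j) hu.le
  have hfactor : ∀ j, DifferentiableAt ℂ (fun w => (w - z j) / (1 - conj (z j) * w)) u :=
    fun j => by fun_prop (disch := exact hden j)
  unfold blaschke
  rw [logDeriv_mul (f := fun w => w) u hu0 ?_ differentiableAt_id ?_, logDeriv_id',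
    logDeriv_prod (f := fun j w => (w - z j) / (1 - conj (z j) * w))
      (fun j _ => div_ne_zero (hnum j) (hden j)) (fun j _ => hfactor j)]
  · simp only [logDeriv_sub_div_one_sub_conj_mul (hnum _) (hden _)]
    push_cast
    rw [mul_add, mul_sum, mul_one_div_cancel hu0]
    simp only [mul_one_div_sub_add_conj_div_one_sub_conj_mul (hz _) hu]
    push_cast
    rfl
  · exact prod_ne_zero_iff.mpr fun j _ => div_ne_zero (hnum j) (hden j)
  · exact DifferentiableAt.fun_finsetProd fun j _ => hfactor j

theorem logDeriv_id_mul_blaschke_ne_zero (hz : ∀ j, ‖z j‖ < 1) (hu : ‖u‖ = 1) :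
    logDeriv (fun w => w * blaschke z w) u ≠ 0 := by
  intro h
  have := mul_logDeriv_id_mul_blaschke hz hu
  rw [h, mul_zero, eq_comm, ofReal_eq_zero] at this
  have hpos : ∀ j ∈ univ, 0 ≤ (1 - normSq (z j)) / normSq (u - z j) := fun j _ =>
    div_nonneg (by rw [normSq_eq_norm_sq]; nlinarith [hz j, norm_nonneg (z j)]) (normSq_nonneg _)
  linarith [sum_nonneg hpos]

end Blaschke

section BlaschkePolynomial

variable {ι : Type*} [Fintype ι] (z : ι → ℂ) (c : ℂ)

noncomputable def blaschkeNum : ℂ[X] := X * ∏ j, (X - C (z j))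

noncomputable def blaschkeDen : ℂ[X] := ∏ j, (1 - C (conj (z j)) * X)

noncomputable def blaschkeLevelPoly : ℂ[X] := blaschkeNum z - C c * blaschkeDen z

@[simp]
theorem eval_blaschkeNum (w : ℂ) : (blaschkeNum z).eval w = w * ∏ j, (w - z j) := by
  simp [blaschkeNum, eval_prod]

@[simp]
theorem eval_blaschkeDen (w : ℂ) : (blaschkeDen z).eval w = ∏ j, (1 - conj (z j) * w) := by
  simp [blaschkeDen, eval_prod]

theorem mul_blaschke_eq_div (w : ℂ) :
    w * blaschke z w = (blaschkeNum z).eval w / (blaschkeDen z).eval w := by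
  simp [blaschke, prod_div_distrib, mul_div_assoc]

theorem monic_blaschkeNum : (blaschkeNum z).Monic :=
  monic_X.mul (monic_prod_of_monic _ _ fun _ _ => monic_X_sub_C _)

theorem natDegree_blaschkeNum : (blaschkeNum z).natDegree = Fintype.card ι + 1 := by
  rw [blaschkeNum, monic_X.natDegree_mul (monic_prod_of_monic _ _ fun _ _ => monic_X_sub_C _),
    natDegree_prod_of_monic _ _ fun _ _ => monic_X_sub_C _]
  simp [add_comm]

theorem natDegree_blaschkeDen_le : (blaschkeDen z).natDegree ≤ Fintype.card ι := by
  have hfactor : ∀ j ∈ univ, (1 - C (conj (z j)) * X).natDegree ≤ 1 := fun _ _ => by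
    compute_degree
  simpa [blaschkeDen] using (natDegree_prod_le _ _).trans (sum_le_card_nsmul univ _ 1 hfactor)

theorem natDegree_C_mul_blaschkeDen_lt :
    (C c * blaschkeDen z).natDegree < (blaschkeNum z).natDegree := by
  rw [natDegree_blaschkeNum]
  exact Nat.lt_succ_of_le ((natDegree_C_mul_le _ _).trans (natDegree_blaschkeDen_le z))

theorem monic_blaschkeLevelPoly : (blaschkeLevelPoly z c).Monic :=
  (monic_blaschkeNum z).sub_of_left
    (degree_lt_degree (natDegree_C_mul_blaschkeDen_lt z c))

theorem natDegree_blaschkeLevelPoly :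
    (blaschkeLevelPoly z c).natDegree = Fintype.card ι + 1 := by
  rw [blaschkeLevelPoly, natDegree_sub_eq_left_of_natDegree_lt (natDegree_C_mul_blaschkeDen_lt z c),
    natDegree_blaschkeNum]

variable {z c} {u : ℂ}

theorem eval_blaschkeDen_ne_zero (hz : ∀ j, ‖z j‖ < 1) (hu : ‖u‖ ≤ 1) :
    (blaschkeDen z).eval u ≠ 0 := by
  rw [eval_blaschkeDen]
  exact prod_ne_zero_iff.mpr fun j _ => one_sub_conj_mul_ne_zero (hz j) hu

theorem norm_eq_one_of_isRoot_blaschkeLevelPoly (hz : ∀ j, ‖z j‖ < 1) (hc : ‖c‖ = 1)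
    (h : (blaschkeLevelPoly z c).IsRoot u) : ‖u‖ = 1 := by
  have hND : u * ∏ j, (u - z j) = c * ∏ j, (1 - conj (z j) * u) := by
    simpa [blaschkeLevelPoly, sub_eq_zero] using h
  have hnorm := congrArg norm hND
  simp only [norm_mul, norm_prod, hc, one_mul] at hnorm
  rcases lt_trichotomy ‖u‖ 1 with hlt | heq | hgt
  · have hD : 0 < ∏ j, ‖1 - conj (z j) * u‖ :=
      prod_pos fun j _ => norm_pos_iff.mpr (one_sub_conj_mul_ne_zero (hz j) hlt.le)
    have hle : ∏ j, ‖u - z j‖ ≤ ∏ j, ‖1 - conj (z j) * u‖ :=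
      prod_le_prod (fun j _ => norm_nonneg _)
        fun j _ => norm_sub_le_norm_one_sub_conj_mul (hz j).le hlt.le
    nlinarith [norm_nonneg u]
  · exact heq
  · have hN : 0 < ∏ j, ‖u - z j‖ := prod_pos fun j _ =>
      norm_pos_iff.mpr (sub_ne_zero.mpr (ne_of_apply_ne norm (by linarith [hz j])))
    have hle : ∏ j, ‖1 - conj (z j) * u‖ ≤ ∏ j, ‖u - z j‖ :=
      prod_le_prod (fun j _ => norm_nonneg _)
        fun j _ => norm_one_sub_conj_mul_le_norm_sub (hz j).le hgt.le
    nlinarith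

theorem isRoot_blaschkeLevelPoly_iff (hz : ∀ j, ‖z j‖ < 1) (hc : ‖c‖ = 1) :
    (blaschkeLevelPoly z c).IsRoot u ↔ u * blaschke z u = c := by
  rw [mul_blaschke_eq_div]
  by_cases hD : (blaschkeDen z).eval u = 0
  · refine iff_of_false (fun h => ?_) ?_
    · exact eval_blaschkeDen_ne_zero hz (norm_eq_one_of_isRoot_blaschkeLevelPoly hz hc h).le hD
    · rw [hD, div_zero, eq_comm, ← norm_eq_zero, hc]
      exact one_ne_zero
  · rw [div_eq_iff hD, IsRoot, blaschkeLevelPoly, eval_sub, eval_mul, eval_C, sub_eq_zero]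

theorem eval_derivative_blaschkeLevelPoly_ne_zero (hz : ∀ j, ‖z j‖ < 1) (hc : ‖c‖ = 1)
    (h : (blaschkeLevelPoly z c).IsRoot u) : (derivative (blaschkeLevelPoly z c)).eval u ≠ 0 := by
  have hu := norm_eq_one_of_isRoot_blaschkeLevelPoly hz hc h
  have hD := eval_blaschkeDen_ne_zero hz hu.le
  have hND : (blaschkeNum z).eval u = c * (blaschkeDen z).eval u := by
    simpa only [IsRoot, blaschkeLevelPoly, eval_sub, eval_mul, eval_C, sub_eq_zero] using h
  -- `(N / D)' = (N' D - N D') / D² = (N' - c D') / D` because `N = c D` at a solution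
  have hderiv : deriv (fun w => w * blaschke z w) u
      = (derivative (blaschkeLevelPoly z c)).eval u / (blaschkeDen z).eval u := by
    simp_rw [mul_blaschke_eq_div]
    rw [deriv_fun_div (c := fun w => (blaschkeNum z).eval w) (d := fun w => (blaschkeDen z).eval w)
      (Polynomial.differentiableAt _) (Polynomial.differentiableAt _) hD, Polynomial.deriv,
      Polynomial.deriv, blaschkeLevelPoly, derivative_sub, derivative_C_mul, eval_sub, eval_mul,
      eval_C, hND]
    field_simp
  intro h0
  apply logDeriv_id_mul_blaschke_ne_zero hz hu
  rw [logDeriv_apply, hderiv, h0, zero_div, zero_div]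

theorem nodup_roots_blaschkeLevelPoly (hz : ∀ j, ‖z j‖ < 1) (hc : ‖c‖ = 1) :
    (blaschkeLevelPoly z c).roots.Nodup := by
  classical
  refine Multiset.nodup_iff_count_le_one.mpr fun u => ?_
  rw [count_roots, ← not_lt,
    one_lt_rootMultiplicity_iff_isRoot (monic_blaschkeLevelPoly z c).ne_zero]
  exact fun ⟨h, h'⟩ => eval_derivative_blaschkeLevelPoly_ne_zero hz hc h h'

end BlaschkePolynomial

/-- For a finite Blaschke product `B` with `n` zeros in the open unit disk and `λ` on the
unit circle, the equation `z·B(z) = conj λ` has exactly `n+1` distinct solutions, all on the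
unit circle. -/
theorem blaschke_equation_solutions
    (n : ℕ) (z : Fin n → ℂ) (hz : ∀ j, ‖z j‖ < 1)
    (lam : ℂ) (hlam : ‖lam‖ = 1) :
    ∃ S : Finset ℂ, S.card = n + 1 ∧
      (∀ u : ℂ, (u * ∏ j, (u - z j) / (1 - (starRingEnd ℂ) (z j) * u)
          = (starRingEnd ℂ) lam) ↔ u ∈ S) ∧
      (∀ u ∈ S, ‖u‖ = 1) := by
  have hc : ‖conj lam‖ = 1 := by rwa [Complex.norm_conj]
  set P := blaschkeLevelPoly z (conj lam)
  have hP0 : P ≠ 0 := (monic_blaschkeLevelPoly z _).ne_zero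
  refine ⟨P.roots.toFinset, ?_, fun u => ?_, fun u hu => ?_⟩
  · rw [Multiset.toFinset_card_of_nodup (nodup_roots_blaschkeLevelPoly hz hc),
      ← (IsAlgClosed.splits P).natDegree_eq_card_roots, natDegree_blaschkeLevelPoly,
      Fintype.card_fin]
  · rw [Multiset.mem_toFinset, mem_roots hP0, isRoot_blaschkeLevelPoly_iff hz hc, blaschke]
  · exact norm_eq_one_of_isRoot_blaschkeLevelPoly hz hc
      (isRoot_of_mem_roots (Multiset.mem_toFinset.mp hu))
end

section
/- Let B be an n-fold Blaschke product with zeros z_1,…,z_n in the open unit disk, λ on the unit circle, and w_1,…,w_{n+1} the solutions of w·B(w) = conj(λ). Then the partial fraction decomposition B(z)/(zB(z) − conj(λ)) = Σ_{j=1}^{n+1} m_j/(z − w_j) holds with all m_j > 0 and Σ m_j = 1; explicitly m_j = [1 + Σ_{k=1}^n (1 − |z_k|²)/|w_j − z_k|²]^{−1}. -/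
/-!
Write `B = Q / R` with `Q = ∏ (X - z_k)` and `R = ∏ (1 - conj z_k X)`. The polynomial
`X Q - conj λ R` is monic of degree `n + 1` and vanishes at the `n + 1` points `w_j`, so it is
the nodal polynomial `P = ∏ (X - w_j)`, and `B / (zB - conj λ) = Q / P`. Lagrange interpolation
of `Q`, of degree `n`, at the nodes `w_j` gives `Q / P = ∑ m_j / (z - w_j)` with
`m_j = Q(w_j) / P'(w_j)`, and comparing coefficients of `X ^ n` gives `∑ m_j = 1`. Finally
`P'(w_j) = Q(w_j) (1 + w_j B'(w_j) / B(w_j))`, and on the unit circle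
`w B'(w) / B(w) = ∑ (1 - |z_k|²) / |w - z_k|² > 0`.
-/

open Finset Polynomial

theorem Polynomial.eval_derivative_prod_div_eval_prod {F ι : Type*} [Field F] [DecidableEq ι]
    (s : Finset ι) (f : ι → F[X]) {x : F} (hf : ∀ i ∈ s, (f i).eval x ≠ 0) :
    (derivative (∏ i ∈ s, f i)).eval x / (∏ i ∈ s, f i).eval x
      = ∑ i ∈ s, (derivative (f i)).eval x / (f i).eval x := by
  rw [derivative_prod_finset, eval_finsetSum, sum_div]
  refine sum_congr rfl fun i hi => ?_
  have hprod : ∏ j ∈ s.erase i, (f j).eval x ≠ 0 :=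
    prod_ne_zero_iff.mpr fun j hj => hf j (mem_of_mem_erase hj)
  rw [eval_mul, eval_prod, eval_prod, ← mul_prod_erase s _ hi]
  field_simp

namespace Lagrange

variable {F ι : Type*} [Field F] {s : Finset ι} {v : ι → F}

theorem eq_nodal_of_monic {R : Type*} [CommRing R] [IsDomain R] {v : ι → R} {p : R[X]}
    (hvs : Set.InjOn v s) (hp : p.Monic) (hdeg : p.natDegree = #s)
    (hroot : ∀ i ∈ s, p.eval (v i) = 0) : p = nodal s v := by
  refine eq_of_degree_le_of_eval_index_eq s hvs ?_ ?_ ?_ fun i hi => ?_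
  · rw [degree_eq_natDegree hp.ne_zero, hdeg]
  · rw [degree_nodal, degree_eq_natDegree hp.ne_zero, hdeg]
  · rw [hp.leadingCoeff, nodal_monic.leadingCoeff]
  · rw [hroot i hi, eval_nodal_at_node hi]

variable [DecidableEq ι]

theorem coeff_card_sub_one_eq_sum_mul_nodalWeight (hvs : Set.InjOn v s) {p : F[X]}
    (hp : p.degree < #s) :
    p.coeff (#s - 1) = ∑ i ∈ s, p.eval (v i) * nodalWeight s v i := by
  simp only [coeff_eq_sum hvs hp, nodalWeight, prod_inv_distrib, div_eq_mul_inv]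

theorem eval_div_eval_nodal_eq_sum (hvs : Set.InjOn v s) {p : F[X]} (hp : p.degree < #s)
    {x : F} (hx : ∀ i ∈ s, x ≠ v i) :
    p.eval x / (nodal s v).eval x = ∑ i ∈ s, p.eval (v i) * nodalWeight s v i / (x - v i) := by
  rw [div_eq_iff (eval_nodal_not_at_node hx), mul_comm]
  nth_rewrite 1 [eq_interpolate hvs hp]
  rw [eval_interpolate_not_at_node _ hx]
  congr 1
  refine sum_congr rfl fun i _ => ?_
  ring

end Lagrange

namespace BlaschkeProduct

open ComplexConjugate

variable {n : ℕ} (z : Fin n → ℂ)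

noncomputable def numerator : ℂ[X] := Lagrange.nodal univ z

noncomputable def denominator : ℂ[X] := ∏ k, (1 - C (conj (z k)) * X)

theorem eval_numerator (u : ℂ) : (numerator z).eval u = ∏ k, (u - z k) :=
  Lagrange.eval_nodal

theorem eval_denominator (u : ℂ) : (denominator z).eval u = ∏ k, (1 - conj (z k) * u) := by
  simp [denominator, eval_prod]

theorem prod_eq_eval_div_eval (u : ℂ) :
    ∏ k, (u - z k) / (1 - conj (z k) * u) = (numerator z).eval u / (denominator z).eval u := by
  rw [prod_div_distrib, eval_numerator, eval_denominator]

theorem monic_numerator : (numerator z).Monic := Lagrange.nodal_monic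

theorem natDegree_numerator : (numerator z).natDegree = n := by
  simp [numerator, Lagrange.natDegree_nodal]

theorem natDegree_denominator_le : (denominator z).natDegree ≤ n := by
  refine (natDegree_prod_le _ _).trans ?_
  calc ∑ k, (1 - C (conj (z k)) * X).natDegree ≤ ∑ _k : Fin n, 1 := by
        gcongr; compute_degree
    _ = n := by simp

theorem degree_numerator_lt_card : (numerator z).degree < #(univ : Finset (Fin (n + 1))) := by
  rw [degree_eq_natDegree (monic_numerator z).ne_zero, natDegree_numerator, card_univ,
    Fintype.card_fin]
  exact_mod_cast n.lt_succ_self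

theorem sum_eval_numerator_mul_nodalWeight {w : Fin (n + 1) → ℂ}
    (hwinj : Function.Injective w) :
    ∑ j, (numerator z).eval (w j) * Lagrange.nodalWeight univ w j = 1 := by
  have hlead := (monic_numerator z).coeff_natDegree
  rw [natDegree_numerator] at hlead
  have hcoeff :=
    Lagrange.coeff_card_sub_one_eq_sum_mul_nodalWeight hwinj.injOn (degree_numerator_lt_card z)
  rwa [card_univ, Fintype.card_fin, Nat.add_sub_cancel, hlead, eq_comm] at hcoeff

theorem one_add_sum_pos (hz : ∀ k, ‖z k‖ < 1) (u : ℂ) :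
    0 < 1 + ∑ k, (1 - ‖z k‖ ^ 2) / ‖u - z k‖ ^ 2 := by
  have hterm : ∀ k, 0 ≤ (1 - ‖z k‖ ^ 2) / ‖u - z k‖ ^ 2 := fun k =>
    div_nonneg (by nlinarith [hz k, norm_nonneg (z k)]) (sq_nonneg _)
  linarith [sum_nonneg fun k (_ : k ∈ univ) => hterm k]

theorem one_sub_conj_mul_ne_zero {a u : ℂ} (ha : ‖a‖ < 1) (hu : ‖u‖ = 1) :
    1 - conj a * u ≠ 0 := by
  rw [sub_ne_zero]
  refine fun h => ha.ne ?_
  simpa [hu] using congrArg norm h.symm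

theorem eval_numerator_ne_zero (hz : ∀ k, ‖z k‖ < 1) {u : ℂ} (hu : ‖u‖ = 1) :
    (numerator z).eval u ≠ 0 := by
  rw [eval_numerator]
  exact prod_ne_zero_iff.mpr fun k _ => sub_ne_zero.mpr fun h => (hz k).ne (h ▸ hu)

theorem eval_denominator_ne_zero {u : ℂ} (hu : ∀ k, 1 - conj (z k) * u ≠ 0) :
    (denominator z).eval u ≠ 0 := by
  rw [eval_denominator]
  exact prod_ne_zero_iff.mpr fun k _ => hu k

theorem mul_logDeriv_factor_of_norm_eq_one {a u : ℂ} (hu : ‖u‖ = 1) (hne : u ≠ a) :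
    u / (u - a) + u * conj a / (1 - conj a * u) = ((1 - ‖a‖ ^ 2) / ‖u - a‖ ^ 2 : ℝ) := by
  have hu0 : u ≠ 0 := by rintro rfl; simp at hu
  have hconj : conj u * u = 1 := by
    rw [mul_comm, Complex.mul_conj, Complex.normSq_eq_norm_sq, hu]; norm_num
  have hden : 1 - conj a * u = u * conj (u - a) := by
    rw [map_sub]; linear_combination -hconj
  have hnorm : ∀ b : ℂ, ((‖b‖ ^ 2 : ℝ) : ℂ) = b * conj b := fun b => by
    rw [Complex.mul_conj, Complex.normSq_eq_norm_sq]
  have hsub : u - a ≠ 0 := sub_ne_zero.mpr hne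
  have hsub' : conj (u - a) ≠ 0 := (_root_.map_ne_zero _).mpr hsub
  rw [hden, Complex.ofReal_div, Complex.ofReal_sub, Complex.ofReal_one, hnorm, hnorm]
  field_simp
  rw [map_sub]
  linear_combination hconj

theorem mul_logDeriv_eq_sum (hz : ∀ k, ‖z k‖ < 1) {u : ℂ} (hu : ‖u‖ = 1) :
    u * ((derivative (numerator z)).eval u / (numerator z).eval u
        - (derivative (denominator z)).eval u / (denominator z).eval u)
      = ((∑ k, (1 - ‖z k‖ ^ 2) / ‖u - z k‖ ^ 2 : ℝ) : ℂ) := by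
  have hne : ∀ k, u ≠ z k := fun k h => (hz k).ne (h ▸ hu)
  rw [numerator, Lagrange.nodal_eq, denominator,
    eval_derivative_prod_div_eval_prod _ _ fun k _ => by simpa using sub_ne_zero.mpr (hne k),
    eval_derivative_prod_div_eval_prod _ _ fun k _ => by
      simpa using one_sub_conj_mul_ne_zero (hz k) hu,
    ← sum_sub_distrib, mul_sum, Complex.ofReal_sum]
  refine sum_congr rfl fun k _ => ?_
  rw [← mul_logDeriv_factor_of_norm_eq_one hu (hne k)]
  simp only [derivative_sub, derivative_X, derivative_C, sub_zero, eval_one, eval_sub, eval_X,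
    eval_C, derivative_one, derivative_mul, zero_mul, mul_one, zero_add, zero_sub, eval_neg,
    eval_mul]
  ring

theorem mul_eval_numerator_eq {u c : ℂ} (hu : (denominator z).eval u ≠ 0)
    (hsol : u * ∏ k, (u - z k) / (1 - conj (z k) * u) = c) :
    u * (numerator z).eval u = c * (denominator z).eval u := by
  rwa [prod_eq_eval_div_eval, ← mul_div_assoc, div_eq_iff hu] at hsol

theorem X_mul_numerator_sub_eq_nodal (hz : ∀ k, ‖z k‖ < 1) {w : Fin (n + 1) → ℂ}
    (hwinj : Function.Injective w) (hwcirc : ∀ j, ‖w j‖ = 1) {c : ℂ}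
    (hwsol : ∀ j, w j * ∏ k, (w j - z k) / (1 - conj (z k) * w j) = c) :
    X * numerator z - C c * denominator z = Lagrange.nodal univ w := by
  have hXQ : (X * numerator z).natDegree = n + 1 := by
    rw [monic_X.natDegree_mul (monic_numerator z), natDegree_X, natDegree_numerator, add_comm]
  have hdeg : (C c * denominator z).natDegree < (X * numerator z).natDegree :=
    hXQ ▸ Nat.lt_succ_of_le ((natDegree_C_mul_le _ _).trans (natDegree_denominator_le z))
  refine Lagrange.eq_nodal_of_monic hwinj.injOn ?_ ?_ fun j _ => ?_
  · exact (monic_X.mul (monic_numerator z)).sub_of_left (degree_lt_degree hdeg)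
  · rw [natDegree_sub_eq_left_of_natDegree_lt hdeg, hXQ, card_univ, Fintype.card_fin]
  · rw [eval_sub, eval_mul, eval_X, eval_mul, eval_C, sub_eq_zero]
    exact mul_eval_numerator_eq z
      (eval_denominator_ne_zero z fun k => one_sub_conj_mul_ne_zero (hz k) (hwcirc j)) (hwsol j)

theorem eval_derivative_nodal_eq (hz : ∀ k, ‖z k‖ < 1) {w : Fin (n + 1) → ℂ}
    (hwinj : Function.Injective w) (hwcirc : ∀ j, ‖w j‖ = 1) {c : ℂ}
    (hwsol : ∀ j, w j * ∏ k, (w j - z k) / (1 - conj (z k) * w j) = c) (j : Fin (n + 1)) :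
    (derivative (Lagrange.nodal univ w)).eval (w j)
      = (numerator z).eval (w j)
          * ((1 + ∑ k, (1 - ‖z k‖ ^ 2) / ‖w j - z k‖ ^ 2 : ℝ) : ℂ) := by
  have hQ := eval_numerator_ne_zero z hz (hwcirc j)
  have hR := eval_denominator_ne_zero z fun k => one_sub_conj_mul_ne_zero (hz k) (hwcirc j)
  have hroot := mul_eval_numerator_eq z hR (hwsol j)
  rw [← X_mul_numerator_sub_eq_nodal z hz hwinj hwcirc hwsol, Complex.ofReal_add,
    Complex.ofReal_one, ← mul_logDeriv_eq_sum z hz (hwcirc j)]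
  simp only [derivative_sub, derivative_mul, derivative_X, derivative_C, one_mul, zero_mul,
    zero_add, eval_sub, eval_add, eval_mul, eval_X, eval_C]
  field_simp
  linear_combination (derivative (denominator z)).eval (w j) * hroot

theorem prod_div_mul_prod_sub_eq_eval_div_eval {ζ : ℂ} (hζ : ∀ k, 1 - conj (z k) * ζ ≠ 0)
    (c : ℂ) :
    (∏ k, (ζ - z k) / (1 - conj (z k) * ζ))
        / (ζ * ∏ k, (ζ - z k) / (1 - conj (z k) * ζ) - c)
      = (numerator z).eval ζ / (X * numerator z - C c * denominator z).eval ζ := by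
  have hR := eval_denominator_ne_zero z hζ
  simp only [prod_eq_eval_div_eval, eval_sub, eval_mul, eval_X, eval_C]
  rw [mul_div_assoc', div_sub' hR, div_div_div_cancel_right₀ hR, mul_comm c]

end BlaschkeProduct

open BlaschkeProduct in
theorem blaschke_partial_fractions_general
    (n : ℕ) (z : Fin n → ℂ) (hz : ∀ k, ‖z k‖ < 1)
    (lam : ℂ)
    (w : Fin (n + 1) → ℂ) (hwinj : Function.Injective w)
    (hwcirc : ∀ j, ‖w j‖ = 1)
    (hwsol : ∀ j, w j * ∏ k, (w j - z k) / (1 - (starRingEnd ℂ) (z k) * w j)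
        = (starRingEnd ℂ) lam) :
    ∃ m : Fin (n + 1) → ℝ,
      (∀ j, m j = (1 + ∑ k, (1 - ‖z k‖ ^ 2) / ‖w j - z k‖ ^ 2)⁻¹) ∧
      (∀ j, 0 < m j) ∧ (∑ j, m j = 1) ∧
      (∀ ζ : ℂ, (∀ j, ζ ≠ w j) → (∀ k, 1 - (starRingEnd ℂ) (z k) * ζ ≠ 0) →
        (∏ k, (ζ - z k) / (1 - (starRingEnd ℂ) (z k) * ζ))
            / (ζ * ∏ k, (ζ - z k) / (1 - (starRingEnd ℂ) (z k) * ζ) - (starRingEnd ℂ) lam)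
          = ∑ j, (m j : ℂ) / (ζ - w j)) := by
  set m : Fin (n + 1) → ℝ := fun j =>
    (1 + ∑ k, (1 - ‖z k‖ ^ 2) / ‖w j - z k‖ ^ 2)⁻¹
  have hm : ∀ j, (m j : ℂ) = (numerator z).eval (w j) * Lagrange.nodalWeight univ w j := by
    intro j
    rw [Lagrange.nodalWeight_eq_eval_derivative_nodal (mem_univ j),
      eval_derivative_nodal_eq z hz hwinj hwcirc hwsol, mul_inv,
      mul_inv_cancel_left₀ (eval_numerator_ne_zero z hz (hwcirc j)), Complex.ofReal_inv]
  refine ⟨m, fun _ => rfl, fun j => inv_pos.mpr (one_add_sum_pos z hz (w j)), ?_,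
    fun ζ hζw hζd => ?_⟩
  · exact_mod_cast
      (sum_congr rfl fun j _ => hm j).trans (sum_eval_numerator_mul_nodalWeight z hwinj)
  · rw [prod_div_mul_prod_sub_eq_eval_div_eval z hζd,
      X_mul_numerator_sub_eq_nodal z hz hwinj hwcirc hwsol,
      Lagrange.eval_div_eval_nodal_eq_sum hwinj.injOn (degree_numerator_lt_card z)
        fun j _ => hζw j]
    simp only [hm]

/-- Partial fraction expansion of `B(z)/(zB(z) − conj λ)` for a finite Blaschke product `B`:
the coefficients `m_j` are positive, sum to one, and are given by the explicit formula
`m_j = [1 + Σ_k (1 − |z_k|²)/|w_j − z_k|²]⁻¹`. -/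
theorem blaschke_partial_fractions
    (n : ℕ) (z : Fin n → ℂ) (hz : ∀ k, ‖z k‖ < 1)
    (lam : ℂ) (hlam : ‖lam‖ = 1)
    (w : Fin (n + 1) → ℂ) (hwinj : Function.Injective w)
    (hwcirc : ∀ j, ‖w j‖ = 1)
    (hwsol : ∀ j, w j * ∏ k, (w j - z k) / (1 - (starRingEnd ℂ) (z k) * w j)
        = (starRingEnd ℂ) lam) :
    ∃ m : Fin (n + 1) → ℝ,
      (∀ j, m j = (1 + ∑ k, (1 - ‖z k‖ ^ 2) / ‖w j - z k‖ ^ 2)⁻¹) ∧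
      (∀ j, 0 < m j) ∧ (∑ j, m j = 1) ∧
      (∀ ζ : ℂ, (∀ j, ζ ≠ w j) → (∀ k, 1 - (starRingEnd ℂ) (z k) * ζ ≠ 0) →
        (∏ k, (ζ - z k) / (1 - (starRingEnd ℂ) (z k) * ζ))
            / (ζ * ∏ k, (ζ - z k) / (1 - (starRingEnd ℂ) (z k) * ζ) - (starRingEnd ℂ) lam)
          = ∑ j, (m j : ℂ) / (ζ - w j)) :=
  blaschke_partial_fractions_general n z hz lam w hwinj hwcirc hwsol
end

section
/- Fix a monic polynomial Φ_n with all zeros in the open unit disk and two distinct points λ, μ on the unit circle. Then the zeros of the paraorthogonal polynomials zΦ_n(z) − conj(λ)Φ_n^*(z) and zΦ_n(z) − conj(μ)Φ_n^*(z) strictly interlace on the unit circle. -/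
/-!
Write `Φ = ∏ (z - a)` with `‖a‖ < 1`. Then `z Φ(z) = c Φ^*(z)` says `B(z) = c` for the Blaschke
product `B(z) = ∏ (z - a) / (1 - conj a * z)` over the zeros of `z Φ(z)`. Since `|B| < 1` inside
the disk and `|B| > 1` outside, all such `z` lie on the circle, and there `B(e^{it}) = e^{i G(t)}`
for a phase `G` with `G(t + 2π) = G(t) + 2π(n + 1)`, strictly increasing because its derivative is a
sum of Poisson kernels. So for `c = e^{iα}` the zeros are `e^{iθ_j}` with `G(θ_j) = α + 2πj`,
`j = 0, …, n`, and for `e^{iβ}` with `α < β < α + 2π` they sit in between.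
-/

open Polynomial

open Complex ComplexConjugate
open scoped Real

lemma polyStar_mul {p q : ℂ[X]} {m k : ℕ} (hp : p.natDegree ≤ m) (hq : q.natDegree ≤ k) :
    polyStar (m + k) (p * q) = polyStar m p * polyStar k q := by
  rw [polyStar, Polynomial.map_mul,
    reflect_mul _ _ (natDegree_map_le.trans hp) (natDegree_map_le.trans hq)]
  rfl

lemma polyStar_X_sub_C (a : ℂ) : polyStar 1 (X - C a) = 1 - C (conj a) * X := by
  simp [polyStar, reflect_sub, reflect_C]

lemma polyStar_multiset_prod_X_sub_C (s : Multiset ℂ) :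
    polyStar s.card (s.map (X - C ·)).prod = (s.map fun a => 1 - C (conj a) * X).prod := by
  induction s using Multiset.induction_on with
  | empty => simp [polyStar]
  | cons a s ih =>
    rw [Multiset.card_cons, add_comm, Multiset.map_cons, Multiset.prod_cons,
      polyStar_mul (natDegree_X_sub_C_le a) (natDegree_multiset_prod_X_sub_C_eq_card s).le,
      polyStar_X_sub_C, ih, Multiset.map_cons, Multiset.prod_cons]

lemma isRoot_X_mul_sub_C_mul_polyStar_iff (r : Multiset ℂ) (c z : ℂ) :
    (X * (r.map (X - C ·)).prod - C c * polyStar r.card (r.map (X - C ·)).prod).IsRoot z ↔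
      ((0 ::ₘ r).map (z - ·)).prod = c * ((0 ::ₘ r).map (1 - conj · * z)).prod := by
  simp [polyStar_multiset_prod_X_sub_C, eval_multiset_prod, Multiset.map_map, sub_eq_zero]

lemma Multiset.prod_map_lt_prod_map_of_nonneg {ι R : Type*} [CommSemiring R] [PartialOrder R]
    [IsStrictOrderedRing R] {s : Multiset ι} (hs : s ≠ 0) {f g : ι → R}
    (h0 : ∀ i ∈ s, 0 ≤ f i) (h : ∀ i ∈ s, f i < g i) :
    (s.map f).prod < (s.map g).prod := by
  obtain ⟨a, ha⟩ := exists_mem_of_ne_zero hs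
  obtain ⟨t, rfl⟩ := exists_cons_of_mem ha
  simp only [map_cons, prod_cons]
  have ht : ∀ i ∈ t, 0 ≤ f i ∧ f i < g i := fun i hi =>
    ⟨h0 i (mem_cons_of_mem hi), h i (mem_cons_of_mem hi)⟩
  refine mul_lt_mul_of_nonneg_of_pos (h a (mem_cons_self a t))
    (prod_map_le_prod_map₀ f g (fun i hi => (ht i hi).1) fun i hi => (ht i hi).2.le)
    (h0 a (mem_cons_self a t)) (prod_pos fun x hx => ?_)
  obtain ⟨i, hi, rfl⟩ := mem_map.1 hx
  exact (ht i hi).1.trans_lt (ht i hi).2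

lemma exp_mul_I_eq_exp_mul_I_iff {x y : ℝ} :
    exp (x * I) = exp (y * I) ↔ ∃ m : ℤ, x = y + m * (2 * π) := by
  rw [← Circle.coe_exp, ← Circle.coe_exp, Circle.coe_inj, Circle.exp_eq_exp]

lemma exists_angles_of_ne {c d : ℂ} (hc : ‖c‖ = 1) (hd : ‖d‖ = 1) (hcd : c ≠ d) :
    ∃ α β : ℝ, α < β ∧ β < α + 2 * π ∧ exp (α * I) = c ∧ exp (β * I) = d := by
  obtain ⟨x, rfl⟩ : ∃ x : Circle, (x : ℂ) = c := ⟨⟨c, mem_sphere_zero_iff_norm.2 hc⟩, rfl⟩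
  obtain ⟨y, rfl⟩ : ∃ y : Circle, (y : ℂ) = d := ⟨⟨d, mem_sphere_zero_iff_norm.2 hd⟩, rfl⟩
  have hxy : x ≠ y := fun h => hcd (congrArg _ h)
  refine ⟨arg x, Circle.angleDiff x y + arg x, ?_, ?_, ?_, ?_⟩
  · linarith [Circle.angleDiff_pos hxy]
  · linarith [Circle.angleDiff_lt_two_pi x y]
  · rw [← Circle.coe_exp, Circle.exp_arg]
  · rw [← Circle.coe_exp, Circle.exp_add, Circle.exp_arg, Circle.exp_angleDiff_mul]

section DegreeLift

variable {G : ℝ → ℝ} {p q : ℝ}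

lemma map_add_int_mul (hG : ∀ t, G (t + p) = G t + q) (t : ℝ) (m : ℤ) :
    G (t + m * p) = G t + m * q := by
  induction m using Int.induction_on with
  | zero => simp
  | succ k ih =>
    have h := hG (t + k * p)
    push_cast at h ih ⊢
    rw [show t + (k + 1) * p = t + k * p + p by ring, h, ih]
    ring
  | pred k ih =>
    have h := hG (t + (-k - 1 : ℝ) * p)
    push_cast at h ih ⊢
    rw [show t + (-k - 1) * p + p = t + -k * p by ring, ih] at h
    linarith

lemma surjective_of_map_add (hc : Continuous G) (hq : 0 < q) (hG : ∀ t, G (t + p) = G t + q) :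
    Function.Surjective G := by
  intro y
  obtain ⟨m, hm⟩ := exists_int_lt ((y - G 0) / q)
  obtain ⟨M, hM⟩ := exists_int_gt ((y - G 0) / q)
  have hGm := map_add_int_mul hG 0 m
  have hGM := map_add_int_mul hG 0 M
  rw [lt_div_iff₀ hq] at hm
  rw [div_lt_iff₀ hq] at hM
  rw [zero_add] at hGm hGM
  exact intermediate_value_univ (m * p) (M * p) hc ⟨by linarith, by linarith⟩

lemma symm_add_mul_two_pi (e : ℝ ≃o ℝ) {N : ℕ} (he : ∀ t, e (t + 2 * π) = e t + N * (2 * π))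
    (x : ℝ) : e.symm (x + N * (2 * π)) = e.symm x + 2 * π := by
  rw [e.symm_apply_eq, he, e.apply_symm_apply]

lemma exp_apply_mul_I_eq_exp_mul_I_iff (e : ℝ ≃o ℝ) {N : ℕ} (hN : 0 < N)
    (he : ∀ t, e (t + 2 * π) = e t + N * (2 * π)) (α t : ℝ) :
    exp (e t * I) = exp (α * I) ↔
      ∃ j < N, exp (t * I) = exp (e.symm (α + j * (2 * π)) * I) := by
  simp only [exp_mul_I_eq_exp_mul_I_iff]
  constructor
  · rintro ⟨k, hk⟩
    obtain ⟨j, hj⟩ := Int.eq_ofNat_of_zero_le (Int.emod_nonneg k (by omega : (N : ℤ) ≠ 0))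
    have hjN : (j : ℤ) < N := hj ▸ Int.emod_lt_of_pos k (by omega)
    have hkj : (k : ℝ) = j + (k / N : ℤ) * N := by
      exact_mod_cast hj ▸ (Int.emod_add_ediv_mul k N).symm
    have hshift : e (t + (-(k / N) : ℤ) * (2 * π)) = α + j * (2 * π) := by
      rw [map_add_int_mul he, hk, hkj]
      push_cast
      ring
    refine ⟨j, by omega, k / N, ?_⟩
    rw [← hshift, e.symm_apply_apply]
    push_cast
    ring
  · rintro ⟨j, hj, m, hm⟩
    refine ⟨j + m * N, ?_⟩
    rw [hm, map_add_int_mul he, e.apply_symm_apply]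
    push_cast; ring

end DegreeLift

lemma norm_one_sub_conj_mul_sq_sub_norm_sub_sq (a z : ℂ) :
    ‖1 - conj a * z‖ ^ 2 - ‖z - a‖ ^ 2 = (1 - ‖a‖ ^ 2) * (1 - ‖z‖ ^ 2) := by
  simp only [← normSq_eq_norm_sq, normSq_apply, sub_re, sub_im, mul_re, mul_im, conj_re, conj_im,
    one_re, one_im]
  ring

lemma norm_sub_lt_norm_one_sub_conj_mul {a z : ℂ} (ha : ‖a‖ < 1) (hz : ‖z‖ < 1) :
    ‖z - a‖ < ‖1 - conj a * z‖ := by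
  rw [← sq_lt_sq₀ (norm_nonneg _) (norm_nonneg _), ← sub_pos,
    norm_one_sub_conj_mul_sq_sub_norm_sub_sq]
  exact mul_pos (by nlinarith [norm_nonneg a]) (by nlinarith [norm_nonneg z])

lemma norm_one_sub_conj_mul_lt_norm_sub {a z : ℂ} (ha : ‖a‖ < 1) (hz : 1 < ‖z‖) :
    ‖1 - conj a * z‖ < ‖z - a‖ := by
  rw [← sq_lt_sq₀ (norm_nonneg _) (norm_nonneg _), ← sub_neg,
    norm_one_sub_conj_mul_sq_sub_norm_sub_sq]
  exact mul_neg_of_pos_of_neg (by nlinarith [norm_nonneg a]) (by nlinarith)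

lemma re_one_add_div_one_sub_pos {w : ℂ} (hw : ‖w‖ < 1) : 0 < ((1 + w) / (1 - w)).re := by
  have hw1 : 1 - w ≠ 0 := fun h => by simp [← sub_eq_zero.1 h] at hw
  have hsq : w.re * w.re + w.im * w.im < 1 := by
    rw [← normSq_apply, normSq_eq_norm_sq]; nlinarith [norm_nonneg w]
  rw [div_re, ← add_div]
  apply div_pos _ (normSq_pos.2 hw1)
  simp only [add_re, sub_re, one_re, add_im, sub_im, one_im]
  nlinarith

/-- For `‖a‖ < 1`, a continuous argument of the Blaschke factor `(z - a) / (1 - conj a * z)` at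
`z = exp (t * I)`: the factor equals `z * w / conj w` with `w = 1 - a * exp (-t * I)`, which lies in
the right half-plane. -/
noncomputable def blaschkeArg (a : ℂ) (t : ℝ) : ℝ := t + 2 * arg (1 - a * exp (-t * I))

lemma norm_mul_exp_neg_mul_I_lt_one {a : ℂ} (ha : ‖a‖ < 1) (t : ℝ) : ‖a * exp (-t * I)‖ < 1 := by
  rwa [norm_mul, ← ofReal_neg, norm_exp_ofReal_mul_I, mul_one]

lemma sub_eq_exp_blaschkeArg_mul (a : ℂ) (t : ℝ) :
    exp (t * I) - a = exp (blaschkeArg a t * I) * (1 - conj a * exp (t * I)) := by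
  rw [blaschkeArg]
  set w := 1 - a * exp (-t * I)
  have hsub : exp (t * I) - a = exp (t * I) * w := by
    rw [mul_sub, mul_one, mul_left_comm, ← exp_add]; simp
  have hconj : 1 - conj a * exp (t * I) = conj w := by simp [w, ← exp_conj]
  have hexp : exp (↑(t + 2 * arg w) * I) = exp (t * I) * exp (arg w * I) * exp (arg w * I) := by
    rw [← exp_add, ← exp_add]
    congr 1
    push_cast
    ring
  have hpolar := norm_mul_exp_arg_mul_I w
  have hpolar_conj := congrArg conj hpolar
  have hinv : exp (arg w * I) * conj (exp (arg w * I)) = 1 := by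
    rw [← exp_conj, ← exp_add]; simp
  rw [map_mul, conj_ofReal] at hpolar_conj
  rw [hsub, hconj, hexp]
  linear_combination (-exp (t * I)) * hpolar + (exp (t * I) * exp (arg w * I) ^ 2) * hpolar_conj
    + (-exp (t * I) * ‖w‖ * exp (arg w * I)) * hinv

lemma hasDerivAt_blaschkeArg {a : ℂ} (ha : ‖a‖ < 1) (t : ℝ) :
    HasDerivAt (blaschkeArg a)
      (((1 + a * exp (-t * I)) / (1 - a * exp (-t * I))).re) t := by
  set w := a * exp (-t * I)
  have hw := norm_mul_exp_neg_mul_I_lt_one ha t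
  have hw1 : 1 - w ∈ slitPlane := by
    rw [sub_eq_add_neg]
    exact mem_slitPlane_of_norm_lt_one (by rwa [norm_neg])
  have hlin : HasDerivAt (fun s : ℝ => 1 - a * exp (-s * I)) (I * w) t := by
    refine ((((hasDerivAt_id (t : ℂ)).neg.mul_const I).cexp.const_mul a).const_sub 1).comp_ofReal
      |>.congr_deriv ?_
    simp only [w, Pi.neg_apply, id_eq]
    ring
  have harg : HasDerivAt (fun s : ℝ => arg (1 - a * exp (-s * I))) (I * w / (1 - w)).im t := by
    simpa only [Function.comp_def, imCLM_apply, log_im] using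
      imCLM.hasFDerivAt.comp_hasDerivAt t (hlin.clog_real hw1)
  refine ((hasDerivAt_id t).add (harg.const_mul 2)).congr_deriv ?_
  have hw0 : 1 - w ≠ 0 := slitPlane_ne_zero hw1
  rw [show (1 + w) / (1 - w) = 1 + 2 * (w / (1 - w)) by field_simp; ring, mul_div_assoc]
  simp

lemma strictMono_blaschkeArg {a : ℂ} (ha : ‖a‖ < 1) : StrictMono (blaschkeArg a) :=
  strictMono_of_hasDerivAt_pos (hasDerivAt_blaschkeArg ha)
    fun t => re_one_add_div_one_sub_pos (norm_mul_exp_neg_mul_I_lt_one ha t)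

lemma continuous_blaschkeArg {a : ℂ} (ha : ‖a‖ < 1) : Continuous (blaschkeArg a) :=
  continuous_iff_continuousAt.2 fun t => (hasDerivAt_blaschkeArg ha t).continuousAt

lemma blaschkeArg_add_two_pi (a : ℂ) (t : ℝ) :
    blaschkeArg a (t + 2 * π) = blaschkeArg a t + 2 * π := by
  have : exp (-↑(t + 2 * π) * I) = exp (-t * I) := by
    rw [show -↑(t + 2 * π) * I = -t * I - 2 * π * I by push_cast; ring, exp_sub,
      exp_two_pi_mul_I, div_one]
  rw [blaschkeArg, blaschkeArg, this]
  ring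

noncomputable def blaschkeProdArg (s : Multiset ℂ) (t : ℝ) : ℝ := (s.map (blaschkeArg · t)).sum

section BlaschkeProd

variable {s : Multiset ℂ}

lemma strictMono_blaschkeProdArg (hs : ∀ a ∈ s, ‖a‖ < 1) (hs0 : s ≠ 0) :
    StrictMono (blaschkeProdArg s) :=
  fun _ _ hlt =>
    Multiset.sum_lt_sum_of_nonempty hs0 fun a ha => strictMono_blaschkeArg (hs a ha) hlt

lemma continuous_blaschkeProdArg (hs : ∀ a ∈ s, ‖a‖ < 1) : Continuous (blaschkeProdArg s) :=
  continuous_multiset_sum s fun a ha => continuous_blaschkeArg (hs a ha)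

lemma blaschkeProdArg_add_two_pi (t : ℝ) :
    blaschkeProdArg s (t + 2 * π) = blaschkeProdArg s t + s.card * (2 * π) := by
  simp [blaschkeProdArg, blaschkeArg_add_two_pi, Multiset.sum_map_add]

lemma prod_sub_eq_exp_blaschkeProdArg_mul (s : Multiset ℂ) (t : ℝ) :
    (s.map (exp (t * I) - ·)).prod =
      exp (blaschkeProdArg s t * I) * (s.map (1 - conj · * exp (t * I))).prod := by
  induction s using Multiset.induction_on with
  | empty => simp [blaschkeProdArg]
  | cons a s ih =>
    simp only [Multiset.map_cons, Multiset.prod_cons, blaschkeProdArg, Multiset.sum_cons] at ih ⊢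
    rw [sub_eq_exp_blaschkeArg_mul, ih]
    push_cast
    rw [add_mul, exp_add]
    ring

lemma norm_eq_one_of_prod_sub_eq (hs : ∀ a ∈ s, ‖a‖ < 1) (hs0 : s ≠ 0)
    {c z : ℂ} (hc : ‖c‖ = 1) (h : (s.map (z - ·)).prod = c * (s.map (1 - conj · * z)).prod) :
    ‖z‖ = 1 := by
  have hnorm : (s.map (‖z - ·‖)).prod = (s.map (‖1 - conj · * z‖)).prod := by
    have hprod (m : Multiset ℂ) : ‖m.prod‖ = (m.map (‖·‖)).prod :=
      map_multiset_prod (normHom : ℂ →*₀ ℝ) m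
    simpa [hprod, Multiset.map_map, Function.comp_def, hc] using congrArg (‖·‖) h
  rcases lt_trichotomy ‖z‖ 1 with hz | hz | hz
  · exact absurd hnorm (Multiset.prod_map_lt_prod_map_of_nonneg hs0 (fun _ _ => norm_nonneg _)
      fun a ha => norm_sub_lt_norm_one_sub_conj_mul (hs a ha) hz).ne
  · exact hz
  · exact absurd hnorm.symm (Multiset.prod_map_lt_prod_map_of_nonneg hs0 (fun _ _ => norm_nonneg _)
      fun a ha => norm_one_sub_conj_mul_lt_norm_sub (hs a ha) hz).ne

noncomputable def blaschkeProdArgIso (s : Multiset ℂ) (hs : ∀ a ∈ s, ‖a‖ < 1) (hs0 : s ≠ 0) :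
    ℝ ≃o ℝ :=
  StrictMono.orderIsoOfSurjective (blaschkeProdArg s) (strictMono_blaschkeProdArg hs hs0)
    (surjective_of_map_add (continuous_blaschkeProdArg hs)
      (by have := Multiset.card_pos.2 hs0; positivity) blaschkeProdArg_add_two_pi)

section BlaschkeProdArgIso

variable (hs : ∀ a ∈ s, ‖a‖ < 1) (hs0 : s ≠ 0)

lemma blaschkeProdArgIso_add_two_pi (t : ℝ) :
    blaschkeProdArgIso s hs hs0 (t + 2 * π) = blaschkeProdArgIso s hs hs0 t + s.card * (2 * π) :=
  blaschkeProdArg_add_two_pi t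

lemma prod_sub_eq_exp_mul_prod_iff (α : ℝ) (z : ℂ) :
    (s.map (z - ·)).prod = exp (α * I) * (s.map (1 - conj · * z)).prod ↔
      ∃ j < s.card, z = exp ((blaschkeProdArgIso s hs hs0).symm (α + j * (2 * π)) * I) := by
  set e := blaschkeProdArgIso s hs hs0
  have hroot (t : ℝ) : (s.map (exp (t * I) - ·)).prod =
      exp (α * I) * (s.map (1 - conj · * exp (t * I))).prod ↔ exp (e t * I) = exp (α * I) := by
    have hne : (s.map (1 - conj · * exp (t * I))).prod ≠ 0 := by
      refine Multiset.prod_ne_zero fun h0 => ?_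
      obtain ⟨a, ha, h⟩ := Multiset.mem_map.1 h0
      have := congrArg norm (sub_eq_zero.1 h).symm
      simp [norm_exp_ofReal_mul_I] at this
      linarith [hs a ha]
    rw [prod_sub_eq_exp_blaschkeProdArg_mul, mul_left_inj' hne]
    rfl
  have hlift := exp_apply_mul_I_eq_exp_mul_I_iff e (Multiset.card_pos.2 hs0)
    (blaschkeProdArgIso_add_two_pi hs hs0) α
  constructor
  · intro h
    have hz := norm_eq_one_of_prod_sub_eq hs hs0 (norm_exp_ofReal_mul_I α) h
    rw [← norm_mul_exp_arg_mul_I z, hz, ofReal_one, one_mul] at h ⊢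
    exact (hlift _).1 ((hroot _).1 h)
  · rintro ⟨j, hj, rfl⟩
    exact (hroot _).2 ((hlift _).2 ⟨j, hj, rfl⟩)

end BlaschkeProdArgIso

end BlaschkeProd

/-- The zeros of paraorthogonal polynomials `zΦ − conj(λ)Φ^*` and `zΦ − conj(μ)Φ^*` for
distinct `λ, μ` on the unit circle strictly interlace on the unit circle: there are angles
`θ₀ < φ₀ < θ₁ < φ₁ < ⋯ < θ_n < φ_n < θ₀ + 2π` listing all zeros of the two polynomials. -/
theorem popuc_zeros_interlace
    (n : ℕ) (Φ : Polynomial ℂ) (hmonic : Φ.Monic) (hdeg : Φ.natDegree = n)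
    (hzeros : ∀ z : ℂ, Φ.IsRoot z → ‖z‖ < 1)
    (lam mu : ℂ) (hlam : ‖lam‖ = 1) (hmu : ‖mu‖ = 1) (hne : lam ≠ mu) :
    ∃ θ φ : ℕ → ℝ,
      (∀ j ≤ n, (X * Φ - C ((starRingEnd ℂ) lam) * polyStar n Φ).IsRoot
          (Complex.exp (θ j * Complex.I))) ∧
      (∀ j ≤ n, (X * Φ - C ((starRingEnd ℂ) mu) * polyStar n Φ).IsRoot
          (Complex.exp (φ j * Complex.I))) ∧
      (∀ u : ℂ, (X * Φ - C ((starRingEnd ℂ) lam) * polyStar n Φ).IsRoot u →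
          ∃ j ≤ n, u = Complex.exp (θ j * Complex.I)) ∧
      (∀ u : ℂ, (X * Φ - C ((starRingEnd ℂ) mu) * polyStar n Φ).IsRoot u →
          ∃ j ≤ n, u = Complex.exp (φ j * Complex.I)) ∧
      (∀ j ≤ n, θ j < φ j) ∧
      (∀ j < n, φ j < θ (j + 1)) ∧
      φ n < θ 0 + 2 * Real.pi := by
  obtain ⟨r, rfl⟩ : ∃ r : Multiset ℂ, Φ = (r.map (X - C ·)).prod :=
    ⟨Φ.roots, (IsAlgClosed.splits Φ).eq_prod_roots_of_monic hmonic⟩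
  rw [natDegree_multiset_prod_X_sub_C_eq_card] at hdeg
  subst hdeg
  set P := (r.map (X - C ·)).prod with hP
  have hs : ∀ a ∈ 0 ::ₘ r, ‖a‖ < 1 := by
    simpa using fun a ha => hzeros a (isRoot_of_mem_roots (by rwa [roots_multiset_prod_X_sub_C]))
  set e := blaschkeProdArgIso _ hs Multiset.cons_ne_zero
  have hroots (γ : ℝ) (z : ℂ) :
      (X * P - C (exp (γ * I)) * polyStar r.card P).IsRoot z ↔
        ∃ j ≤ r.card, z = exp (e.symm (γ + j * (2 * π)) * I) := by
    rw [hP, isRoot_X_mul_sub_C_mul_polyStar_iff,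
      prod_sub_eq_exp_mul_prod_iff hs Multiset.cons_ne_zero, Multiset.card_cons]
    simp only [Nat.lt_succ_iff]
    rfl
  obtain ⟨α, β, hαβ, hβα, hα, hβ⟩ :=
    exists_angles_of_ne (by simpa using hlam) (by simpa using hmu)
      ((starRingEnd ℂ).injective.ne hne)
  rw [← hα, ← hβ]
  refine ⟨fun j => e.symm (α + j * (2 * π)), fun j => e.symm (β + j * (2 * π)),
    fun j hj => (hroots α _).2 ⟨j, hj, rfl⟩, fun j hj => (hroots β _).2 ⟨j, hj, rfl⟩,
    fun u hu => (hroots α u).1 hu, fun u hu => (hroots β u).1 hu,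
    fun j _ => e.symm.strictMono (by linarith),
    fun j _ => e.symm.strictMono (by push_cast; linarith), ?_⟩
  have hperiod := symm_add_mul_two_pi e (blaschkeProdArgIso_add_two_pi hs _) α
  rw [Multiset.card_cons] at hperiod
  simp only [CharP.cast_eq_zero, zero_mul, add_zero, ← hperiod]
  exact e.symm.strictMono (by push_cast; linarith)
end

section
/- Let f(z) = Σ_{j=1}^{n+1} c_j·(z_j + z)/(z_j − z) with z_j distinct on the unit circle in cyclic order, c_j real and nonzero, Σ c_j = 1. If c_j and c_{j+1} have the same sign then f has an odd number of zeros (with multiplicity) on the open arc of the unit circle between z_j and z_{j+1}; if they have opposite signs, an even number. -/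
/-!
On the unit circle the numerator `N` of `f` is `N(e^{it}) = w(t) G(t)` with `w` a continuous,
nowhere vanishing phase and `G` real: `G` clears the denominators of
`i f(e^{it}) = Σ c_k cot((θ_k - t)/2)`. Each root `e^{ix}` of `N` on the arc `(θ_j, θ_{j+1})`
contributes a factor `e^{it} - e^{ix} = 2i e^{i(t+x)/2} sin((t-x)/2)`, and once these are split off
what remains of `N / w` is continuous, real and nonzero on the closed arc, so of constant sign
there. As each `sin((t-x)/2)` changes sign exactly once on the arc, `G(θ_j) G(θ_{j+1}) < 0` iff
the number of roots on the arc is odd. Finally `G(θ_p) = c_p ∏_{l≠p} sin((θ_l - θ_p)/2)` has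
the sign of `(-1)^p c_p`, and `G(t + 2π) = (-1)^{n+1} G(t)` extends this to the wrap-around arc.
-/

open Polynomial Finset Complex
open scoped Real

theorem exp_mul_I_add_exp_mul_I (x y : ℝ) :
    exp (x * I) + exp (y * I) =
      2 * exp (((x + y) / 2 : ℝ) * I) * (Real.cos ((x - y) / 2) : ℝ) := by
  have hx : exp (((x + y) / 2 : ℝ) * I) * exp (((x - y) / 2 : ℝ) * I) = exp (x * I) := by
    rw [← exp_add]; congr 1; push_cast; ring
  have hy : exp (((x + y) / 2 : ℝ) * I) * exp (-((x - y) / 2 : ℝ) * I) = exp (y * I) := by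
    rw [← exp_add]; congr 1; push_cast; ring
  rw [ofReal_cos, Complex.cos]
  linear_combination -hx - hy

theorem exp_mul_I_sub_exp_mul_I (x y : ℝ) :
    exp (x * I) - exp (y * I) =
      2 * I * exp (((x + y) / 2 : ℝ) * I) * (Real.sin ((x - y) / 2) : ℝ) := by
  have hx : exp (((x + y) / 2 : ℝ) * I) * exp (((x - y) / 2 : ℝ) * I) = exp (x * I) := by
    rw [← exp_add]; congr 1; push_cast; ring
  have hy : exp (((x + y) / 2 : ℝ) * I) * exp (-((x - y) / 2 : ℝ) * I) = exp (y * I) := by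
    rw [← exp_add]; congr 1; push_cast; ring
  rw [ofReal_sin, Complex.sin]
  linear_combination -hx + hy + exp (((x + y) / 2 : ℝ) * I) *
    (exp (((x - y) / 2 : ℝ) * I) - exp (-((x - y) / 2 : ℝ) * I)) * I_sq

section OrderedRing

variable {R : Type*} [CommRing R] [LinearOrder R] [IsStrictOrderedRing R]

theorem Multiset.prod_neg_iff_odd_card {s : Multiset R} (hs : ∀ x ∈ s, x < 0) :
    s.prod < 0 ↔ Odd (Multiset.card s) := by
  induction s using Multiset.induction_on with
  | empty => simp
  | cons a s ih =>
    have hs' : ∀ x ∈ s, x < 0 := fun x hx => hs x (Multiset.mem_cons_of_mem hx)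
    have hne : 0 ≠ s.prod := (Multiset.prod_ne_zero fun h0 => (hs' 0 h0).false).symm
    rw [Multiset.prod_cons, Multiset.card_cons, Nat.odd_add_one, ← ih hs', not_lt,
      hne.le_iff_lt, ← smul_eq_mul, smul_neg_iff_of_neg_left (hs a (Multiset.mem_cons_self a s))]

theorem mul_neg_iff_of_neg_one_pow_mul_pos {x y u v : R} {k : ℕ}
    (hx : 0 < (-1) ^ k * u * x) (hy : 0 < (-1) ^ (k + 1) * v * y) : x * y < 0 ↔ 0 < u * v := by
  have he : ((-1 : R) ^ k) * (-1) ^ k = 1 := by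
    rw [← pow_add]; exact Even.neg_one_pow ⟨k, rfl⟩
  have huvxy : u * v * (x * y) < 0 := by
    have := mul_pos hx hy
    rw [pow_succ] at this
    linarith [show (-1) ^ k * u * x * ((-1) ^ k * -1 * v * y) = -(u * v * (x * y)) by
      linear_combination (-(u * v * (x * y))) * he]
  constructor <;> intro h <;> nlinarith

end OrderedRing

theorem mul_pos_of_continuousOn_of_ne_zero {f : ℝ → ℝ} {a b : ℝ} (hab : a ≤ b)
    (hf : ContinuousOn f (Set.Icc a b)) (hf0 : ∀ t ∈ Set.Icc a b, f t ≠ 0) :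
    0 < f a * f b := by
  by_contra! hle
  have h0 : (0 : ℝ) ∈ Set.uIcc (f a) (f b) := by
    rcases mul_nonpos_iff.1 hle with h | h
    · exact Set.mem_uIcc.2 (Or.inr h.symm)
    · exact Set.mem_uIcc.2 (Or.inl h)
  rw [← Set.uIcc_of_le hab] at hf hf0
  obtain ⟨t, ht, hft⟩ := intermediate_value_uIcc hf h0
  exact hf0 t ht hft

theorem countable_setOf_prod_sin_eq_zero (σ : Multiset ℝ) :
    {t : ℝ | (σ.map fun x => Real.sin ((t - x) / 2)).prod = 0}.Countable := by
  refine ((σ.toFinset.countable_toSet).biUnion fun x _ =>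
    Set.countable_range fun k : ℤ => x + k * (2 * π)).mono fun t ht => ?_
  obtain ⟨x, hx, hx0⟩ := Multiset.mem_map.1 (Multiset.prod_eq_zero_iff.1 ht)
  obtain ⟨k, hk⟩ := Real.sin_eq_zero_iff.1 hx0
  exact Set.mem_biUnion (Multiset.mem_toFinset.2 hx) ⟨k, by linarith⟩

theorem im_eq_zero_of_ofReal_eq_mul_ofReal {φ : ℝ → ℂ} {g h : ℝ → ℝ}
    (hφ : Continuous φ) (hh : {t | h t = 0}.Countable) (hgφh : ∀ t, (g t : ℂ) = φ t * h t)
    (t : ℝ) : (φ t).im = 0 := by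
  have : (fun t => (φ t).im) = fun _ => 0 := by
    refine Continuous.ext_on (hh.dense_compl ℝ) (continuous_im.comp hφ) continuous_const
      fun t (ht : h t ≠ 0) => ?_
    simpa [ht] using congrArg im (hgφh t)
  exact congrFun this t

open scoped Classical in
theorem exists_eval_exp_mul_I_eq_mul_prod_sin {p : ℂ[X]} {a b : ℝ}
    (ha : p.eval (exp (a * I)) ≠ 0) (hb : p.eval (exp (b * I)) ≠ 0) :
    ∃ (σ : Multiset ℝ) (Q : ℝ → ℂ),
      Multiset.card σ =
        Multiset.card (p.roots.filter fun u => ∃ t : ℝ, a < t ∧ t < b ∧ u = exp (t * I)) ∧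
      (∀ x ∈ σ, a < x ∧ x < b) ∧ Continuous Q ∧ (∀ t ∈ Set.Icc a b, Q t ≠ 0) ∧
      ∀ t : ℝ,
        p.eval (exp (t * I)) = Q t * ((σ.map fun x => Real.sin ((t - x) / 2)).prod : ℝ) := by
  set onArc : ℂ → Prop := fun u => ∃ t : ℝ, a < t ∧ t < b ∧ u = exp (t * I)
  choose! arg harg using fun u (hu : onArc u) => hu
  have hp : p ≠ 0 := by rintro rfl; exact ha eval_zero
  set S := p.roots.filter onArc
  set T := p.roots.filter fun u => ¬ onArc u
  refine ⟨S.map arg, fun t => p.leadingCoeff *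
    (S.map fun r => 2 * I * exp (((t + arg r) / 2 : ℝ) * I)).prod *
    (T.map fun r => exp (t * I) - r).prod, Multiset.card_map _ _, ?_, ?_, ?_, ?_⟩
  · intro x hx
    obtain ⟨r, hr, rfl⟩ := Multiset.mem_map.1 hx
    exact ⟨(harg r (Multiset.mem_filter.1 hr).2).1, (harg r (Multiset.mem_filter.1 hr).2).2.1⟩
  · exact (continuous_const.mul (continuous_multiset_prod _ fun r _ => by fun_prop)).mul
      (continuous_multiset_prod _ fun r _ => by fun_prop)
  · intro t ht
    refine mul_ne_zero (mul_ne_zero (leadingCoeff_ne_zero.2 hp) ?_) ?_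
    · exact Multiset.prod_ne_zero (by simp [exp_ne_zero])
    refine Multiset.prod_ne_zero fun h0 => ?_
    obtain ⟨r, hr, hr0⟩ := Multiset.mem_map.1 h0
    obtain ⟨hroot, hr⟩ := Multiset.mem_filter.1 hr
    have hpr : p.eval (exp (t * I)) = 0 := by
      rw [sub_eq_zero.1 hr0]; exact isRoot_of_mem_roots hroot
    rcases ht.1.eq_or_lt with rfl | hat
    · exact ha hpr
    rcases ht.2.eq_or_lt with rfl | htb
    · exact hb hpr
    exact hr ⟨t, hat, htb, (sub_eq_zero.1 hr0).symm⟩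
  · intro t
    rw [(IsAlgClosed.splits p).eval_eq_prod_roots, ← Multiset.filter_add_not onArc p.roots,
      Multiset.map_add, Multiset.prod_add]
    have hS : (S.map fun r => exp (t * I) - r) =
        S.map fun r =>
          2 * I * exp (((t + arg r) / 2 : ℝ) * I) * (Real.sin ((t - arg r) / 2) : ℝ) :=
      Multiset.map_congr rfl fun r hr => by
        conv_lhs => rw [(harg r (Multiset.mem_filter.1 hr).2).2.2]
        exact exp_mul_I_sub_exp_mul_I t (arg r)
    have hcast : (((S.map arg).map fun x => Real.sin ((t - x) / 2)).prod : ℂ) =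
        (S.map fun r => (Real.sin ((t - arg r) / 2) : ℂ)).prod := by
      rw [Multiset.map_map]
      exact (map_multiset_prod ofRealHom _).trans (by rw [Multiset.map_map]; rfl)
    rw [hS, Multiset.prod_map_mul, hcast]
    ring

open scoped Classical in
theorem odd_card_roots_on_arc_iff {p : ℂ[X]} {a b : ℝ} (hab : a < b) (hba : b ≤ a + 2 * π)
    {w : ℝ → ℂ} {g : ℝ → ℝ} (hw : Continuous w) (hw0 : ∀ t, w t ≠ 0)
    (hpg : ∀ t : ℝ, p.eval (exp (t * I)) = w t * g t) (ha : g a ≠ 0) (hb : g b ≠ 0) :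
    Odd (Multiset.card
        (p.roots.filter fun u => ∃ t : ℝ, a < t ∧ t < b ∧ u = exp (t * I))) ↔
      g a * g b < 0 := by
  have hp : ∀ t, g t ≠ 0 → p.eval (exp (t * I)) ≠ 0 := fun t ht => by
    rw [hpg]; exact mul_ne_zero (hw0 t) (ofReal_ne_zero.2 ht)
  obtain ⟨σ, Q, hcard, hσ, hQ, hQ0, hpQ⟩ :=
    exists_eval_exp_mul_I_eq_mul_prod_sin (hp a ha) (hp b hb)
  set sinProd : ℝ → ℝ := fun t => (σ.map fun x => Real.sin ((t - x) / 2)).prod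
  have hφ : Continuous fun t => Q t / w t := hQ.div hw hw0
  have hgφ : ∀ t, (g t : ℂ) = Q t / w t * sinProd t := fun t => by
    rw [div_mul_eq_mul_div, ← hpQ, hpg, mul_div_cancel_left₀ _ (hw0 t)]
  -- `Q / w` is real wherever the sine product is nonzero, hence everywhere by continuity.
  have him := im_eq_zero_of_ofReal_eq_mul_ofReal hφ (countable_setOf_prod_sin_eq_zero σ) hgφ
  have hg : ∀ t, g t = (Q t / w t).re * sinProd t := fun t => by
    simpa [him t] using congrArg re (hgφ t)
  have hφ_pos : 0 < (Q a / w a).re * (Q b / w b).re :=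
    mul_pos_of_continuousOn_of_ne_zero hab.le (continuous_re.comp hφ).continuousOn
      fun t ht h0 => div_ne_zero (hQ0 t ht) (hw0 t) (Complex.ext h0 (him t))
  have hsin : sinProd a * sinProd b < 0 ↔ Odd (Multiset.card σ) := by
    rw [← Multiset.prod_map_mul, Multiset.prod_neg_iff_odd_card, Multiset.card_map]
    simp only [Multiset.mem_map]
    rintro _ ⟨x, hx, rfl⟩
    obtain ⟨hax, hxb⟩ := hσ x hx
    exact mul_neg_of_neg_of_pos (Real.sin_neg_of_neg_of_neg_pi_lt (by linarith) (by linarith))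
      (Real.sin_pos_of_pos_of_lt_pi (by linarith) (by linarith))
  rw [← hcard, ← hsin, hg a, hg b, mul_mul_mul_comm]
  exact (smul_neg_iff_of_pos_left hφ_pos).symm

/-- `f(z) ∏_k (z_k - z)` with `z_k = exp (θ_k i)`: off the poles, its roots are the zeros
of `f`. -/
noncomputable def quasiCaratheodoryNumerator (n : ℕ) (θ c : ℕ → ℝ) : ℂ[X] :=
  ∑ i ∈ range (n + 1), C (c i : ℂ) * (C (exp (θ i * I)) + X) *
    ∏ k ∈ (range (n + 1)).erase i, (C (exp (θ k * I)) - X)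

/-- `∏_l sin((θ_l - t)/2) · Σ_k c_k cot((θ_k - t)/2)`, where the sum is `i f(e^{it})`. -/
noncomputable def cotSumNumerator (n : ℕ) (θ c : ℕ → ℝ) (t : ℝ) : ℝ :=
  ∑ k ∈ range (n + 1), c k * Real.cos ((θ k - t) / 2) *
    ∏ l ∈ (range (n + 1)).erase k, Real.sin ((θ l - t) / 2)

theorem eval_quasiCaratheodoryNumerator_exp (n : ℕ) (θ c : ℕ → ℝ) (t : ℝ) :
    (quasiCaratheodoryNumerator n θ c).eval (exp (t * I)) =
      2 * (2 * I) ^ n * (∏ l ∈ range (n + 1), exp (((θ l + t) / 2 : ℝ) * I)) *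
        cotSumNumerator n θ c t := by
  simp only [quasiCaratheodoryNumerator, cotSumNumerator, eval_finsetSum, eval_mul, eval_add,
    eval_sub, eval_C, eval_X, eval_prod, ofReal_sum, ofReal_mul, ofReal_prod, mul_sum]
  refine sum_congr rfl fun k hk => ?_
  rw [exp_mul_I_add_exp_mul_I, prod_congr rfl fun l _ => exp_mul_I_sub_exp_mul_I (θ l) t,
    prod_mul_distrib, prod_mul_distrib, prod_const, card_erase_of_mem hk, card_range,
    Nat.add_sub_cancel, ← mul_prod_erase _ (fun l => exp (((θ l + t) / 2 : ℝ) * I)) hk]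
  ring

theorem cotSumNumerator_at_node {n p : ℕ} (θ c : ℕ → ℝ) (hp : p ∈ range (n + 1)) :
    cotSumNumerator n θ c (θ p) =
      c p * ∏ l ∈ (range (n + 1)).erase p, Real.sin ((θ l - θ p) / 2) := by
  rw [cotSumNumerator, sum_eq_single_of_mem p hp, sub_self, zero_div, Real.cos_zero, mul_one]
  intro k _ hkp
  rw [prod_eq_zero (mem_erase.2 ⟨Ne.symm hkp, hp⟩) (by simp), mul_zero]

theorem cotSumNumerator_add_two_pi (n : ℕ) (θ c : ℕ → ℝ) (t : ℝ) :
    cotSumNumerator n θ c (t + 2 * π) = (-1) ^ (n + 1) * cotSumNumerator n θ c t := by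
  have h : ∀ x, (x - (t + 2 * π)) / 2 = (x - t) / 2 - π := fun x => by ring
  simp only [cotSumNumerator, h, Real.cos_sub_pi, Real.sin_sub_pi, prod_neg, mul_sum]
  refine sum_congr rfl fun k hk => ?_
  rw [card_erase_of_mem hk, card_range, Nat.add_sub_cancel]
  ring

theorem neg_one_pow_mul_prod_sin_pos {n p : ℕ} {θ : ℕ → ℝ}
    (hθ : StrictMonoOn θ (Set.Iic (n + 1))) (hθwrap : θ (n + 1) = θ 0 + 2 * π)
    (hp : p ≤ n) :
    0 < (-1) ^ p * ∏ l ∈ (range (n + 1)).erase p, Real.sin ((θ l - θ p) / 2) := by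
  have hsign :
      ∏ l ∈ (range (n + 1)).erase p, (if l < p then (-1 : ℝ) else 1) = (-1) ^ p := by
    have hfilter : ((range (n + 1)).erase p).filter (· < p) = range p := by
      ext l
      simp only [mem_filter, mem_erase, mem_range]
      omega
    rw [prod_ite, prod_const, prod_const_one, mul_one, hfilter, card_range]
  rw [← hsign, ← prod_mul_distrib]
  refine prod_pos fun l hl => ?_
  obtain ⟨hlp, hl⟩ := mem_erase.1 hl
  rw [mem_range] at hl
  have hmem : ∀ {k}, k ≤ n + 1 → k ∈ Set.Iic (n + 1) := Set.mem_Iic.2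
  have hwindow : ∀ k ≤ n, θ 0 ≤ θ k ∧ θ k < θ 0 + 2 * π := fun k hk =>
    ⟨hθ.monotoneOn (hmem (by omega)) (hmem (by omega)) k.zero_le,
      hθwrap ▸ hθ (hmem (by omega)) (hmem le_rfl) (by omega)⟩
  obtain ⟨hl_ge, hl_lt⟩ := hwindow l (by omega)
  obtain ⟨hp_ge, hp_lt⟩ := hwindow p hp
  split_ifs with hlp'
  · have := hθ (hmem (by omega)) (hmem (by omega)) hlp'
    linarith [Real.sin_neg_of_neg_of_neg_pi_lt (x := (θ l - θ p) / 2) (by linarith) (by linarith)]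
  · have := hθ (hmem (by omega)) (hmem (by omega)) (by omega : p < l)
    linarith [Real.sin_pos_of_pos_of_lt_pi (x := (θ l - θ p) / 2) (by linarith) (by linarith)]

theorem neg_one_pow_mul_cotSumNumerator_pos {n : ℕ} {θ c : ℕ → ℝ}
    (hθ : StrictMonoOn θ (Set.Iic (n + 1))) (hθwrap : θ (n + 1) = θ 0 + 2 * π)
    (hcwrap : c (n + 1) = c 0) (hcne : ∀ j ≤ n, c j ≠ 0) {p : ℕ} (hp : p ≤ n + 1) :
    0 < (-1) ^ p * c p * cotSumNumerator n θ c (θ p) := by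
  have hnode : ∀ p ≤ n, 0 < (-1) ^ p * c p * cotSumNumerator n θ c (θ p) := fun p hp => by
    rw [cotSumNumerator_at_node θ c (mem_range.2 (by omega))]
    calc 0 < c p ^ 2 *
          ((-1) ^ p * ∏ l ∈ (range (n + 1)).erase p, Real.sin ((θ l - θ p) / 2)) :=
          mul_pos (pow_two_pos_of_ne_zero (hcne p hp)) (neg_one_pow_mul_prod_sin_pos hθ hθwrap hp)
      _ = _ := by ring
  rcases hp.lt_or_eq with hp | rfl
  · exact hnode p (by omega)
  have he : ((-1 : ℝ) ^ (n + 1)) * (-1) ^ (n + 1) = 1 := by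
    rw [← pow_add]; exact Even.neg_one_pow ⟨n + 1, rfl⟩
  rw [hθwrap, cotSumNumerator_add_two_pi, hcwrap]
  calc 0 < c 0 * cotSumNumerator n θ c (θ 0) := by simpa using hnode 0 (Nat.zero_le n)
    _ = _ := by linear_combination (-(c 0 * cotSumNumerator n θ c (θ 0))) * he

open scoped Classical in
theorem quasi_caratheodory_zero_parity_general
    (n : ℕ) (θ : ℕ → ℝ) (c : ℕ → ℝ)
    (hθmono : ∀ j k : ℕ, j < k → k ≤ n + 1 → θ j < θ k)
    (hθwrap : θ (n + 1) = θ 0 + 2 * Real.pi)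
    (hcwrap : c (n + 1) = c 0)
    (hcne : ∀ j ≤ n, c j ≠ 0) :
    ∀ j ≤ n,
      (Odd (Multiset.card
        ((∑ i ∈ Finset.range (n + 1),
            C ((c i : ℂ)) * (C (Complex.exp (θ i * Complex.I)) + X)
              * ∏ k ∈ (Finset.range (n + 1)).erase i,
                  (C (Complex.exp (θ k * Complex.I)) - X)).roots.filter
          (fun u => ∃ t : ℝ, θ j < t ∧ t < θ (j + 1) ∧ u = Complex.exp (t * Complex.I))))
        ↔ 0 < c j * c (j + 1)) := by
  intro j hj
  have hθ : StrictMonoOn θ (Set.Iic (n + 1)) := fun k _ l hl hkl => hθmono k l hkl hl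
  have hj₀ := neg_one_pow_mul_cotSumNumerator_pos hθ hθwrap hcwrap hcne (p := j) (by omega)
  have hj₁ := neg_one_pow_mul_cotSumNumerator_pos hθ hθwrap hcwrap hcne (p := j + 1) (by omega)
  have harc : θ (j + 1) ≤ θ j + 2 * π := by
    have h₁ := hθ.monotoneOn (Set.mem_Iic.2 (by omega)) (Set.mem_Iic.2 le_rfl)
      (by omega : j + 1 ≤ n + 1)
    have h₀ := hθ.monotoneOn (Set.mem_Iic.2 (Nat.zero_le _)) (Set.mem_Iic.2 (by omega))
      (Nat.zero_le j)
    linarith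
  refine (odd_card_roots_on_arc_iff (hθmono j (j + 1) (by omega) (by omega)) harc ?_ ?_
    (eval_quasiCaratheodoryNumerator_exp n θ c) (right_ne_zero_of_mul hj₀.ne')
    (right_ne_zero_of_mul hj₁.ne')).trans (mul_neg_iff_of_neg_one_pow_mul_pos hj₀ hj₁)
  · fun_prop
  · exact fun t => mul_ne_zero (by simp) (prod_ne_zero_iff.2 fun _ _ => exp_ne_zero _)

open scoped Classical in
/-- Parity of the number of zeros (with multiplicity) of the quasi-Carathéodory function
`f(z) = Σ_{j=0}^{n} c_j (z_j + z)/(z_j − z)` (with `z_j = e^{iθ_j}` in cyclic order, `c_j`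
real, nonzero, summing to `1`) on the open arc between consecutive poles `z_j, z_{j+1}`:
the count is odd iff `c_j` and `c_{j+1}` have the same sign.  The zeros of `f` with
multiplicity on the arc are the roots there of the numerator polynomial
`N = Σ_j c_j (z_j + X) ∏_{k≠j} (z_k − X)`. -/
theorem quasi_caratheodory_zero_parity
    (n : ℕ) (θ : ℕ → ℝ) (c : ℕ → ℝ)
    (hθmono : ∀ j k : ℕ, j < k → k ≤ n + 1 → θ j < θ k)
    (hθwrap : θ (n + 1) = θ 0 + 2 * Real.pi)
    (hcwrap : c (n + 1) = c 0)
    (hcne : ∀ j ≤ n, c j ≠ 0)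
    (hsum : ∑ j ∈ Finset.range (n + 1), c j = 1) :
    ∀ j ≤ n,
      (Odd (Multiset.card
        ((∑ i ∈ Finset.range (n + 1),
            C ((c i : ℂ)) * (C (Complex.exp (θ i * Complex.I)) + X)
              * ∏ k ∈ (Finset.range (n + 1)).erase i,
                  (C (Complex.exp (θ k * Complex.I)) - X)).roots.filter
          (fun u => ∃ t : ℝ, θ j < t ∧ t < θ (j + 1) ∧ u = Complex.exp (t * Complex.I))))
        ↔ 0 < c j * c (j + 1)) :=
  quasi_caratheodory_zero_parity_general n θ c hθmono hθwrap hcwrap hcne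
end

section
/- Let Φ_n(z) = z^n + Σ_{k=0}^{n-1}(−1)^{n−k}s_{n−k}z^k be a monic polynomial with zeros a_1,…,a_n and elementary symmetric functions s_k, and let λ ∈ ∂𝔻. Then the identity Φ_{n+1}′(z; λ) = (n+1)·Φ_n(z), where Φ_{n+1}(z;λ) = zΦ_n(z) − conj(λ)Φ_n^*(z), holds if and only if (n−j)·s_{n−j} + (−1)^{n−1}·conj(λ)·(j+1)·conj(s_{j+1}) = 0 for all j = 0,…,n−1. -/
open Polynomial Finset

/-- For `Φ_n(z) = ∏ (z − a_j)` with elementary symmetric functions `s_k` and `λ` on the unit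
circle, the identity `Φ_{n+1}'(z;λ) = (n+1)Φ_n(z)` (where `Φ_{n+1}(z;λ) = zΦ_n − conj(λ)Φ_n^*`)
holds iff `(n−j)s_{n−j} + (−1)^{n−1} conj(λ)(j+1) conj(s_{j+1}) = 0` for `j = 0,…,n−1`. -/
theorem derivative_of_popuc_condition
    (n : ℕ) (a : Fin n → ℂ)
    (s : ℕ → ℂ)
    (hs : ∀ k, s k = ∑ t ∈ Finset.powersetCard k (Finset.univ : Finset (Fin n)),
        ∏ j ∈ t, a j)
    (Φ : Polynomial ℂ) (hΦ : Φ = ∏ j, (X - C (a j)))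
    (lam : ℂ) (hlam : ‖lam‖ = 1) :
    derivative (X * Φ - C ((starRingEnd ℂ) lam) * polyStar n Φ) = C ((n : ℂ) + 1) * Φ ↔
      ∀ j < n,
        ((n - j : ℕ) : ℂ) * s (n - j)
            + (-1) ^ (n - 1) * (starRingEnd ℂ) lam * ((j : ℂ) + 1)
              * (starRingEnd ℂ) (s (j + 1)) = 0 := by
  have hmonic : Φ.Monic := by
    rw [hΦ]; exact monic_prod_of_monic _ _ fun i _ => monic_X_sub_C _
  have hdeg : Φ.natDegree = n := by
    rw [hΦ, natDegree_prod_of_monic _ _ fun i _ => monic_X_sub_C _]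
    simp
  -- coefficient formula
  have hΦm : Φ = ((Finset.univ.val.map a).map fun t => X - C t).prod := by
    rw [hΦ, Multiset.map_map]; rfl
  have hcard : Multiset.card (Finset.univ.val.map a) = n := by simp
  have hc : ∀ k, k ≤ n → Φ.coeff k = (-1) ^ (n - k) * s (n - k) := by
    intro k hk
    rw [hΦm, Multiset.prod_X_sub_C_coeff _ (by rw [hcard]; exact hk), hcard,
      Finset.esymm_map_val, hs (n - k)]
  have hc0 : ∀ k, n < k → Φ.coeff k = 0 := fun k hk =>
    coeff_eq_zero_of_natDegree_lt (hdeg ▸ hk)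
  have hcn : Φ.coeff n = 1 := by
    have := hmonic.coeff_natDegree; rwa [hdeg] at this
  -- star coefficients
  have hstar : ∀ i, i ≤ n → (polyStar n Φ).coeff i = (starRingEnd ℂ) (Φ.coeff (n - i)) := by
    intro i hi
    rw [polyStar, coeff_reflect, revAt_le hi, coeff_map]
  have hstar0 : ∀ i, n < i → (polyStar n Φ).coeff i = 0 := by
    intro i hi
    rw [polyStar, coeff_reflect, revAt_eq_self_of_lt hi, coeff_map, hc0 i hi, map_zero]
  rw [Polynomial.ext_iff]
  -- coefficient of derivative at m
  have key : ∀ m : ℕ,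
      (derivative (X * Φ - C ((starRingEnd ℂ) lam) * polyStar n Φ)).coeff m =
        (Φ.coeff m - (starRingEnd ℂ) lam * (polyStar n Φ).coeff (m + 1)) * (m + 1) := by
    intro m
    rw [coeff_derivative, coeff_sub, coeff_X_mul, coeff_C_mul]
  constructor
  · intro h j hj
    have hm := h j
    rw [key, coeff_C_mul] at hm
    rw [hc j (le_of_lt hj), hstar (j + 1) hj, hc (n - (j + 1)) (Nat.sub_le _ _)] at hm
    have hnj : n - (n - (j + 1)) = j + 1 := Nat.sub_sub_self hj
    rw [hnj] at hm
    rw [map_mul, map_pow, map_neg, map_one] at hm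
    -- now algebra
    have hε : ((-1 : ℂ)) ^ (n - j) * (-1) ^ (n - j) = 1 := by
      rw [← pow_add]; exact Even.neg_one_pow ⟨n - j, rfl⟩
    have hδ : ((-1 : ℂ)) ^ (n - j) * (-1) ^ (j + 1) = (-1) ^ (n - 1) := by
      rw [← pow_add]
      have h1 : n - j + (j + 1) = (n - 1) + 2 := by omega
      rw [h1, pow_add]
      simp
    have hcast : ((n - j : ℕ) : ℂ) = (n : ℂ) - j := by
      push_cast [Nat.cast_sub (le_of_lt hj)]; ring
    rw [hcast]
    linear_combination (-(-1 : ℂ) ^ (n - j)) * hm -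
      s (n - j) * ((n : ℂ) - j) * hε -
      (starRingEnd ℂ) lam * (starRingEnd ℂ) (s (j + 1)) * ((j : ℂ) + 1) * hδ
  · intro h m
    rw [key, coeff_C_mul]
    rcases lt_trichotomy m n with hm | hm | hm
    · have hj := h m hm
      rw [hc m (le_of_lt hm), hstar (m + 1) hm, hc (n - (m + 1)) (Nat.sub_le _ _),
        Nat.sub_sub_self hm, map_mul, map_pow, map_neg, map_one]
      have hε : ((-1 : ℂ)) ^ (n - m) * (-1) ^ (n - m) = 1 := by
        rw [← pow_add]; exact Even.neg_one_pow ⟨n - m, rfl⟩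
      have hδ : ((-1 : ℂ)) ^ (n - m) * (-1) ^ (m + 1) = (-1) ^ (n - 1) := by
        rw [← pow_add]
        have h1 : n - m + (m + 1) = (n - 1) + 2 := by omega
        rw [h1, pow_add]; simp
      have hcast : ((n - m : ℕ) : ℂ) = (n : ℂ) - m := by
        push_cast [Nat.cast_sub (le_of_lt hm)]; ring
      rw [hcast] at hj
      have h2 : (-1 : ℂ) ^ (m + 1) = -(-1) ^ m := by rw [pow_succ]; ring
      rw [h2] at hδ ⊢
      linear_combination (-(-1 : ℂ) ^ (n - m)) * hj +
        (starRingEnd ℂ) lam * (starRingEnd ℂ) (s (m + 1)) * ((m : ℂ) + 1) * ((-1:ℂ)^(m+1)) * hε -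
        (starRingEnd ℂ) lam * (starRingEnd ℂ) (s (m + 1)) * ((m : ℂ) + 1) * ((-1:ℂ)^(n-m)) * hδ
    · subst hm
      rw [hcn, hstar0 (m + 1) (Nat.lt_succ_self m)]
      ring
    · rw [hc0 m hm, hstar0 (m + 1) (by omega)]
      ring
end

section
/- Let A be a contraction on ℂⁿ with rank(1 − A*A) = 1, say 1 − A*A = ρ²⟨x,·⟩x for a unit vector x and ρ ∈ (0,1]. Write A = UB with U unitary and B as in the polar-type decomposition with B = 1 on x^⊥. Then x is a cyclic vector for U if and only if A has no eigenvalue of modulus 1. -/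
/-!
If `A v = c • v` with `‖c‖ = 1`, then `‖A v‖ = ‖v‖`, so the defect `ρ² |⟪x, v⟫|²` vanishes:
`v ⊥ x`, hence `B v = v` and `v` is an eigenvector of `U` orthogonal to `x`. Conversely, an
eigenvector of `U` orthogonal to `x` is fixed by `B`, so it is an eigenvector of `A`, with a
unimodular eigenvalue since `U` is isometric. Both sides therefore say that `U` has no
eigenvector orthogonal to `x`, and for an isometry this is cyclicity of `x`: such an eigenvector
is orthogonal to the whole orbit of `x`, while the orthogonal complement of the cyclic subspace
of `x` is `U`-invariant and, if nonzero, contains an eigenvector.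
-/

open InnerProductSpace Module End Submodule

theorem span_range_pow_apply_mem_invtSubmodule {R M : Type*} [Semiring R] [AddCommMonoid M]
    [Module R M] (f : End R M) (x : M) :
    span R (Set.range fun k : ℕ => (f ^ k) x) ∈ f.invtSubmodule := by
  rw [mem_invtSubmodule_iff_map_le, map_span, span_le]
  rintro _ ⟨_, ⟨k, rfl⟩, rfl⟩
  exact subset_span ⟨k + 1, by simp only [pow_succ', mul_apply]⟩

theorem exists_hasEigenvector_of_mem_invtSubmodule {K V : Type*} [Field K] [IsAlgClosed K]
    [AddCommGroup V] [Module K V] [FiniteDimensional K V] {f : End K V} {p : Submodule K V}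
    (hp : p ∈ f.invtSubmodule) (hp₀ : p ≠ ⊥) :
    ∃ c v, v ∈ p ∧ f.HasEigenvector c v := by
  have : Nontrivial p := nontrivial_iff_ne_bot.mpr hp₀
  obtain ⟨c, hc⟩ := exists_eigenvalue (f.restrict hp)
  obtain ⟨v, hv⟩ := hc.exists_hasEigenvector
  exact ⟨c, v, v.2, mem_eigenspace_iff.mpr (congrArg Subtype.val hv.apply_eq_smul),
    by simpa using hv.2⟩

section Isometry

variable {𝕜 E : Type*} [RCLike 𝕜] [NormedAddCommGroup E] [InnerProductSpace 𝕜 E]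
  {U : End 𝕜 E}

theorem norm_eq_one_of_hasEigenvector_of_inner_map_map
    (hU : ∀ v w, inner 𝕜 (U v) (U w) = inner 𝕜 v w) {c : 𝕜} {v : E}
    (hv : U.HasEigenvector c v) : ‖c‖ = 1 := by
  have h : ‖c‖ * ‖v‖ = 1 * ‖v‖ := by
    rw [one_mul, ← norm_smul, ← hv.apply_eq_smul]
    exact (U.isometryOfInner hU).norm_map v
  exact mul_right_cancel₀ (norm_ne_zero_iff.mpr hv.2) h

theorem orthogonal_mem_invtSubmodule_of_inner_map_map
    (hU : ∀ v w, inner 𝕜 (U v) (U w) = inner 𝕜 v w) {p : Submodule 𝕜 E}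
    [FiniteDimensional 𝕜 p] (hp : p ∈ U.invtSubmodule) : pᗮ ∈ U.invtSubmodule := by
  have hsurj : Function.Surjective (U.restrict hp) := by
    refine LinearMap.injective_iff_surjective.mp fun u w huw => Subtype.ext ?_
    exact (U.isometryOfInner hU).injective (congrArg Subtype.val huw)
  intro v hv w hw
  obtain ⟨u, hu⟩ := hsurj ⟨w, hw⟩
  rw [← show U u = w from congrArg Subtype.val hu, hU]
  exact hv u u.2

theorem inner_pow_apply_eq_zero_of_apply_eq_smul
    (hU : ∀ v w, inner 𝕜 (U v) (U w) = inner 𝕜 v w) {c : 𝕜} {x v : E} (hc : c ≠ 0)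
    (hv : U v = c • v) (hxv : inner 𝕜 x v = 0) (k : ℕ) : inner 𝕜 ((U ^ k) x) v = 0 := by
  induction k with
  | zero => simpa using hxv
  | succ k ih =>
    have hv' : v = U (c⁻¹ • v) := by rw [map_smul, hv, smul_smul, inv_mul_cancel₀ hc, one_smul]
    rw [pow_succ', mul_apply, hv', hU, inner_smul_right, ih, mul_zero]

end Isometry

theorem span_range_pow_apply_eq_top_iff {E : Type*} [NormedAddCommGroup E]
    [InnerProductSpace ℂ E] [FiniteDimensional ℂ E] {U : End ℂ E}
    (hU : ∀ v w, inner ℂ (U v) (U w) = inner ℂ v w) (x : E) :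
    span ℂ (Set.range fun k : ℕ => (U ^ k) x) = ⊤ ↔
      ∀ (c : ℂ) (v : E), ‖c‖ = 1 → U v = c • v → inner ℂ x v = 0 → v = 0 := by
  set M := span ℂ (Set.range fun k : ℕ => (U ^ k) x)
  constructor
  · intro hM c v hc hv hxv
    have hle : M ≤ (ℂ ∙ v)ᗮ := by
      rw [span_le]
      rintro _ ⟨k, rfl⟩
      exact mem_orthogonal_singleton_iff_inner_left.mpr
        (inner_pow_apply_eq_zero_of_apply_eq_smul hU (by rintro rfl; simp at hc) hv hxv k)
    simpa using mem_orthogonal_singleton_iff_inner_left.mp (hle (hM ▸ mem_top : v ∈ M))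
  · intro h
    by_contra hM
    have hx : x ∈ M := subset_span ⟨0, by simp⟩
    obtain ⟨c, v, hvM, hv⟩ := exists_hasEigenvector_of_mem_invtSubmodule
      (orthogonal_mem_invtSubmodule_of_inner_map_map hU
        (span_range_pow_apply_mem_invtSubmodule U x))
      (fun h => hM (orthogonal_eq_bot_iff.mp h))
    exact hv.2 (h c v (norm_eq_one_of_hasEigenvector_of_inner_map_map hU hv) hv.apply_eq_smul
      (inner_right_of_mem_orthogonal hx hvM))

theorem inner_eq_zero_of_norm_apply_eq {𝕜 E : Type*} [RCLike 𝕜] [NormedAddCommGroup E]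
    [InnerProductSpace 𝕜 E] [FiniteDimensional 𝕜 E] {A : End 𝕜 E} {x v : E} {r : 𝕜}
    (hr : r ≠ 0) (hdefect : v - LinearMap.adjoint A (A v) = (r * inner 𝕜 x v) • x)
    (hv : ‖A v‖ = ‖v‖) : inner 𝕜 x v = 0 := by
  have h : inner 𝕜 v (v - LinearMap.adjoint A (A v)) = 0 := by
    rw [inner_sub_right, LinearMap.adjoint_inner_right, inner_self_eq_norm_sq_to_K,
      inner_self_eq_norm_sq_to_K, hv, sub_self]
  rw [hdefect, inner_smul_right, ← inner_conj_symm v x, mul_assoc, RCLike.mul_conj] at h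
  simpa [hr] using h

theorem cyclic_iff_no_unimodular_eigenvalue_general
    (n : ℕ)
    (A U B : EuclideanSpace ℂ (Fin n) →ₗ[ℂ] EuclideanSpace ℂ (Fin n))
    (x : EuclideanSpace ℂ (Fin n))
    (ρ : ℝ) (hρ0 : 0 < ρ)
    (a : ℂ)
    (hdefect : ∀ v, v - (LinearMap.adjoint A) (A v)
        = (((ρ : ℂ)) ^ 2 * (inner ℂ x v : ℂ)) • x)
    (hUiso : ∀ v w, (inner ℂ (U v) (U w) : ℂ) = inner ℂ v w)
    (hB : ∀ v, B v = v + ((a - 1) * (inner ℂ x v : ℂ)) • x)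
    (hAUB : A = U ∘ₗ B) :
    Submodule.span ℂ (Set.range fun k : ℕ => (U ^ k) x) = ⊤ ↔
      ∀ (c : ℂ) (v : EuclideanSpace ℂ (Fin n)), ‖c‖ = 1 → A v = c • v → v = 0 := by
  have hAU : ∀ v, inner ℂ x v = 0 → A v = U v := fun v hxv => by simp [hAUB, hB, hxv]
  rw [span_range_pow_apply_eq_top_iff hUiso]
  constructor
  · intro h c v hc hAv
    have hxv : inner ℂ x v = 0 :=
      inner_eq_zero_of_norm_apply_eq (by exact_mod_cast (pow_pos hρ0 2).ne') (hdefect v)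
        (by rw [hAv, norm_smul, hc, one_mul])
    exact h c v hc (by rw [← hAU v hxv, hAv]) hxv
  · intro h c v hc hUv hxv
    exact h c v hc (by rw [hAU v hxv, hUv])

/-- For a completely non-unitary style decomposition `A = U∘B` of a contraction `A` on `ℂⁿ`
with defect operator `1 − A*A = ρ²⟨x,·⟩x` (`x` a unit vector, `ρ ∈ (0,1]`), where `U` is
unitary and `B` is the identity on `x^⊥` with `Bx = a·x`, `|a|² + ρ² = 1`:  the vector `x`
is cyclic for `U` if and only if `A` has no eigenvalue of modulus `1`. -/
theorem cyclic_iff_no_unimodular_eigenvalue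
    (n : ℕ)
    (A U B : EuclideanSpace ℂ (Fin n) →ₗ[ℂ] EuclideanSpace ℂ (Fin n))
    (x : EuclideanSpace ℂ (Fin n)) (hx : ‖x‖ = 1)
    (ρ : ℝ) (hρ0 : 0 < ρ) (hρ1 : ρ ≤ 1)
    (a : ℂ) (ha : ‖a‖ ^ 2 + ρ ^ 2 = 1)
    (hcontr : ∀ v, ‖A v‖ ≤ ‖v‖)
    (hdefect : ∀ v, v - (LinearMap.adjoint A) (A v)
        = (((ρ : ℂ)) ^ 2 * (inner ℂ x v : ℂ)) • x)
    (hUiso : ∀ v w, (inner ℂ (U v) (U w) : ℂ) = inner ℂ v w)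
    (hUsurj : Function.Surjective U)
    (hB : ∀ v, B v = v + ((a - 1) * (inner ℂ x v : ℂ)) • x)
    (hAUB : A = U ∘ₗ B) :
    Submodule.span ℂ (Set.range fun k : ℕ => (U ^ k) x) = ⊤ ↔
      ∀ (c : ℂ) (v : EuclideanSpace ℂ (Fin n)), ‖c‖ = 1 → A v = c • v → v = 0 :=
  cyclic_iff_no_unimodular_eigenvalue_general n A U B x ρ hρ0 a hdefect hUiso hB hAUB
end
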